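/- arXiv:1203.4148 — 7 statements merged into one kernel-verified Lean document; each statement's English description precedes it below -/
import Mathlib

section
/- The number of rooted trees on {1,...,n} (Cayley trees) with horizontal profile (1, n_1, ..., n_r) — that is, exactly n_i vertices at distance i from the root, with n = 1 + n_1 + ... + n_r — equals (n!/(n_1! ⋯ n_r!)) · ∏_{i=1}^{r-1} n_i^{n_{i+1}}. -/
/-!
A rooted tree on `V` is the same as a level function `l : V → ℕ` with a single zero (the
distance to the root) together with a parent map `P` sending each vertex of level `i + 1` to a
vertex of level `i`: the tree is recovered as the graph of the edges `v — P v`. With the profile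
`h` fixed, the level functions `V → Fin (r + 1)` form one orbit of `Perm V`, whose stabiliser is
`∏ i, Perm (l⁻¹ i)`, so there are `N! / ∏ (h i)!` of them; and for each of them the parent map is
chosen independently at every vertex, among `h i` candidates for the `h (i + 1)` vertices of
level `i + 1`.
-/

open Equiv MulAction SimpleGraph
open scoped Nat

/-- Orbit–stabiliser for `Perm α` acting on `α → ι` by precomposition. -/
theorem ncard_sameFiberCard_mul_prod_factorial {α ι : Type*} [Finite α] [Fintype ι] (f : α → ι) :
    {g : α → ι | ∀ i, {a | g a = i}.ncard = {a | f a = i}.ncard}.ncard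
      * ∏ i, ({a | f a = i}.ncard)! = (Nat.card α)! := by
  have horbit : orbit (Perm α)ᵈᵐᵃ f
      = {g : α → ι | ∀ i, {a | g a = i}.ncard = {a | f a = i}.ncard} := by
    ext g
    constructor
    · rintro ⟨σ, rfl⟩ i
      exact Set.ncard_congr' ((DomMulAct.mk.symm σ).subtypeEquiv fun _ => Iff.rfl)
    · intro hg
      have e : ∀ i, {a // g a = i} ≃ {a // f a = i} := fun i => (Finite.card_eq.mp
        ((Nat.card_coe_set_eq _).trans ((hg i).trans (Nat.card_coe_set_eq _).symm))).some
      exact ⟨DomMulAct.mk (ofFiberEquiv e), funext fun a => ofFiberEquiv_map e a⟩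
  have hstab : Nat.card (stabilizer (Perm α)ᵈᵐᵃ f) = {σ : Perm α | f ∘ σ = f}.ncard :=
    Nat.card_congr (subtypeEquiv DomMulAct.mk.symm fun _ => DomMulAct.mem_stabilizer_iff)
  rw [← horbit, ← DomMulAct.stabilizer_ncard, ← hstab, ← Nat.card_coe_set_eq, ← Nat.card_prod,
    Nat.card_congr (orbitProdStabilizerEquivGroup _ f), Nat.card_congr DomMulAct.mk.symm,
    Nat.card_perm]

theorem ncard_fiberCard_eq_mul_prod_factorial {α ι : Type*} [Finite α] [Fintype ι] (k : ι → ℕ)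
    (hk : ∑ i, k i = Nat.card α) :
    {g : α → ι | ∀ i, {a | g a = i}.ncard = k i}.ncard * ∏ i, (k i)! = (Nat.card α)! := by
  have hcard : Nat.card α = Nat.card (Σ i, Fin (k i)) := by simp [hk]
  obtain ⟨e⟩ := Finite.card_eq.mp hcard
  have hfiber : ∀ i, {a | (e a).1 = i}.ncard = k i := fun i => by
    rw [← Nat.card_coe_set_eq, ← Nat.card_fin (k i)]
    exact Nat.card_congr ((e.subtypeEquiv fun _ => Iff.rfl).trans (sigmaSubtype i))
  simpa only [hfiber] using ncard_sameFiberCard_mul_prod_factorial fun a => (e a).1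

variable {V : Type*}

def IsParentMap (l : V → ℕ) (P : V → V) : Prop :=
  ∀ v, if l v = 0 then P v = v else l (P v) + 1 = l v

def parentGraph (P : V → V) : SimpleGraph V :=
  SimpleGraph.fromRel fun v w => P v = w

lemma parentGraph_adj {P : V → V} {v w : V} :
    (parentGraph P).Adj v w ↔ v ≠ w ∧ (P v = w ∨ P w = v) :=
  fromRel_adj _ v w

namespace IsParentMap

variable {l : V → ℕ} {P : V → V} (hP : IsParentMap l P)
include hP

lemma apply_of_level_eq_zero {v : V} (hv : l v = 0) : P v = v := by
  simpa [hv] using hP v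

lemma level_apply_add_one {v : V} (hv : l v ≠ 0) : l (P v) + 1 = l v := by
  simpa [hv] using hP v

lemma adj_apply {v : V} (hv : l v ≠ 0) : (parentGraph P).Adj v (P v) := by
  refine parentGraph_adj.2 ⟨fun hvP => ?_, Or.inl rfl⟩
  have := hP.level_apply_add_one hv
  rw [← hvP] at this
  omega

lemma eq_of_adj {v w : V} (hadj : (parentGraph P).Adj v w) (hw : l w + 1 = l v) : P v = w := by
  obtain ⟨hne, hvw | hwv⟩ := parentGraph_adj.1 hadj
  · exact hvw
  · have hw0 : l w ≠ 0 := fun h0 => hne (hwv.symm.trans (hP.apply_of_level_eq_zero h0))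
    have := hP.level_apply_add_one hw0
    rw [hwv] at this
    omega

lemma level_le_of_adj {v w : V} (hadj : (parentGraph P).Adj v w) : l v ≤ l w + 1 := by
  obtain ⟨hne, rfl | rfl⟩ := parentGraph_adj.1 hadj
  · by_cases hv : l v = 0
    · omega
    · have := hP.level_apply_add_one hv
      omega
  · have hw : l w ≠ 0 := fun h0 => hne (hP.apply_of_level_eq_zero h0)
    have := hP.level_apply_add_one hw
    omega

lemma level_le_add_length {u w : V} (p : (parentGraph P).Walk u w) : l u ≤ l w + p.length := by
  induction p with
  | nil => simp
  | cons hadj _ ih =>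
    have := hP.level_le_of_adj hadj
    rw [Walk.length_cons]
    omega

variable {rt : V} (hroot : ∀ v, l v = 0 ↔ v = rt)
include hroot

lemma exists_walk_length_eq_level (v : V) : ∃ p : (parentGraph P).Walk v rt, p.length = l v := by
  induction hn : l v generalizing v with
  | zero => exact (hroot v).1 hn ▸ ⟨Walk.nil, rfl⟩
  | succ n ih =>
    have hv : l v ≠ 0 := by omega
    obtain ⟨p, hp⟩ := ih (P v) (by have := hP.level_apply_add_one hv; omega)
    exact ⟨Walk.cons (hP.adj_apply hv) p, by rw [Walk.length_cons, hp]⟩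

lemma dist_eq_level (v : V) : (parentGraph P).dist rt v = l v := by
  obtain ⟨p, hp⟩ := hP.exists_walk_length_eq_level hroot v
  refine le_antisymm (hp ▸ Walk.length_reverse p ▸ dist_le p.reverse) ?_
  obtain ⟨q, hq⟩ := p.reachable.symm.exists_walk_length_eq_dist
  have := hP.level_le_add_length q.reverse
  rw [Walk.length_reverse, (hroot rt).2 rfl] at this
  omega

lemma connected : (parentGraph P).Connected := by
  have : Nonempty V := ⟨rt⟩
  refine ⟨fun u v => ?_⟩
  obtain ⟨p, -⟩ := hP.exists_walk_length_eq_level hroot u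
  obtain ⟨q, -⟩ := hP.exists_walk_length_eq_level hroot v
  exact p.reachable.trans q.reachable.symm

/-- The edges of `parentGraph P` are the pairs `s(v, P v)` with `v ≠ rt`, all distinct, so a
connected graph on `card V` vertices with `card V - 1` edges: a tree. -/
lemma isTree [Finite V] : (parentGraph P).IsTree := by
  have hedges : (parentGraph P).edgeSet = (fun v => s(v, P v)) '' {rt}ᶜ := by
    ext e
    induction e using Sym2.ind with | h v w => ?_
    simp only [mem_edgeSet, Set.mem_image, Set.mem_compl_iff, Set.mem_singleton_iff]
    constructor
    · intro hadj
      obtain ⟨hne, rfl | rfl⟩ := parentGraph_adj.1 hadj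
      · exact ⟨v, fun hv => hne (hP.apply_of_level_eq_zero ((hroot v).2 hv)).symm, rfl⟩
      · exact ⟨w, fun hw => hne (hP.apply_of_level_eq_zero ((hroot w).2 hw)), Sym2.eq_swap⟩
    · rintro ⟨u, hu, huvw⟩
      rw [← mem_edgeSet, ← huvw, mem_edgeSet]
      exact hP.adj_apply (mt (hroot u).1 hu)
  have hinj : Set.InjOn (fun v => s(v, P v)) {rt}ᶜ := by
    intro v hv w hw hvw
    obtain ⟨hvw, -⟩ | ⟨hvw, hwv⟩ := Sym2.eq_iff.1 hvw
    · exact hvw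
    · have hlv := hP.level_apply_add_one (mt (hroot v).1 hv)
      have hlw := hP.level_apply_add_one (mt (hroot w).1 hw)
      rw [hwv] at hlv
      rw [← hvw] at hlw
      omega
  rw [isTree_iff_connected_and_card]
  refine ⟨hP.connected hroot, ?_⟩
  rw [Nat.card_coe_set_eq, hedges, hinj.ncard_image,
    ← Set.ncard_add_ncard_compl {rt}, Set.ncard_singleton, add_comm]

end IsParentMap

namespace SimpleGraph

variable {G H : SimpleGraph V} {rt v : V}

lemma Connected.exists_adj_dist_add_one (hG : G.Connected) (hv : v ≠ rt) :
    ∃ w, G.Adj v w ∧ G.dist rt w + 1 = G.dist rt v := by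
  obtain ⟨p, hp⟩ := (hG v rt).exists_walk_length_eq_dist
  cases p with
  | nil => exact absurd rfl hv
  | @cons _ w _ hadj q =>
    refine ⟨w, hadj, ?_⟩
    have hq : G.dist rt w ≤ q.length := dist_comm (G := G) ▸ dist_le q
    have hpos : G.dist rt v ≠ 0 := fun h => hv (hG.dist_eq_zero_iff.1 h).symm
    rw [Walk.length_cons, dist_comm] at hp
    rcases hadj.diff_dist_adj (u := rt) with h | h | h <;> omega

open scoped Classical in
noncomputable def parent (G : SimpleGraph V) (rt v : V) : V :=
  if h : ∃ w, G.Adj v w ∧ G.dist rt w + 1 = G.dist rt v then h.choose else v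

lemma adj_parent_of_ne (h : G.parent rt v ≠ v) : G.Adj v (G.parent rt v) := by
  unfold parent at h ⊢
  split_ifs with hex
  · exact hex.choose_spec.1
  · exact absurd (dif_neg hex) h

lemma Connected.isParentMap_parent (hG : G.Connected) (rt : V) :
    IsParentMap (G.dist rt) (G.parent rt) := by
  intro v
  split_ifs with hv
  · exact dif_neg fun ⟨w, _, hw⟩ => by omega
  · have hex := hG.exists_adj_dist_add_one (v := v) fun hvr => hv (hvr ▸ dist_self)
    rw [parent, dif_pos hex]
    exact hex.choose_spec.2

lemma parentGraph_parent_le : parentGraph (G.parent rt) ≤ G := by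
  intro v w hadj
  obtain ⟨hne, hvw | hwv⟩ := parentGraph_adj.1 hadj
  · exact hvw ▸ adj_parent_of_ne (hvw ▸ hne.symm)
  · exact (hwv ▸ adj_parent_of_ne (hwv ▸ hne)).symm

lemma IsTree.eq_of_le [Finite V] (hH : H.IsTree) (hG : G.IsTree) (hle : H ≤ G) : H = G := by
  rw [isTree_iff_connected_and_card, Nat.card_coe_set_eq] at hH hG
  exact edgeSet_injective <| Set.eq_of_subset_of_ncard_le (edgeSet_mono hle) (by omega)

lemma IsTree.parentGraph_parent [Finite V] (hG : G.IsTree) : parentGraph (G.parent rt) = G :=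
  ((hG.connected.isParentMap_parent rt).isTree fun _ =>
    hG.connected.dist_eq_zero_iff.trans eq_comm).eq_of_le hG parentGraph_parent_le

end SimpleGraph

lemma IsParentMap.parent_parentGraph {l : V → ℕ} {P : V → V} (hP : IsParentMap l P) {rt : V}
    (hroot : ∀ v, l v = 0 ↔ v = rt) : (parentGraph P).parent rt = P := by
  have hdist := hP.dist_eq_level hroot
  have hQ := (hP.connected hroot).isParentMap_parent rt
  funext v
  by_cases hv : l v = 0
  · rw [hQ.apply_of_level_eq_zero (by rw [hdist, hv]), hP.apply_of_level_eq_zero hv]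
  · have hlev := hQ.level_apply_add_one (by rwa [hdist])
    rw [hdist, hdist] at hlev
    refine (hP.eq_of_adj (adj_parent_of_ne fun h => ?_) hlev).symm
    rw [h] at hlev
    omega

section Counting

variable {r : ℕ} {h : ℕ → ℕ}

lemma card_isParentMap [Fintype V] (l : V → Fin (r + 1))
    (hl : ∀ i, {v | l v = i}.ncard = h i) :
    Nat.card {P : V → V // IsParentMap (fun v => l v) P} = ∏ i : Fin r, h i ^ h (i + 1) := by
  classical
  have hfib : ∀ v, Nat.card {u // if (l v : ℕ) = 0 then u = v else (l u : ℕ) + 1 = l v}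
      = Fin.cases 1 (fun i : Fin r => h i) (l v) := by
    intro v
    rcases Fin.eq_zero_or_eq_succ (l v) with hv | ⟨j, hv⟩
    · simp [hv]
    · rw [hv, Fin.cases_succ, ← Fin.val_castSucc j, ← hl, ← Nat.card_coe_set_eq]
      exact Nat.card_congr (Equiv.subtypeEquivRight fun u => by simp [Fin.ext_iff])
  unfold IsParentMap
  rw [Nat.card_congr (Equiv.subtypePiEquivPi (β := fun _ : V => V)
      (p := fun v u => if (l v : ℕ) = 0 then u = v else (l u : ℕ) + 1 = l v)), Nat.card_pi,
    Finset.prod_congr rfl fun v _ => hfib v, ← Fintype.prod_fiberwise' l]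
  have hpow : ∀ (c : ℕ) j, ∏ _u : {u // l u = j}, c = c ^ h j := fun c j => by
    rw [Finset.prod_const, Finset.card_univ, ← Nat.card_eq_fintype_card, ← hl j,
      ← Nat.card_coe_set_eq]
    rfl
  simp only [hpow, Fin.prod_univ_succ, Fin.cases_zero, one_pow, one_mul, Fin.cases_succ,
    Fin.val_succ]

lemma ncard_profile_isParentMap [Fintype V] :
    {q : (V → Fin (r + 1)) × (V → V) |
        (∀ i, {v | q.1 v = i}.ncard = h i) ∧ IsParentMap (fun v => q.1 v) q.2}.ncard
      = {l : V → Fin (r + 1) | ∀ i, {v | l v = i}.ncard = h i}.ncard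
        * ∏ i : Fin r, h i ^ h (i + 1) := by
  classical
  have hfiber : ∀ l : V → Fin (r + 1),
      Nat.card {P // (∀ i, {v | l v = i}.ncard = h i) ∧ IsParentMap (fun v => l v) P}
        = if ∀ i, {v | l v = i}.ncard = h i then ∏ i : Fin r, h i ^ h (i + 1) else 0 := by
    intro l
    split_ifs with hl
    · rw [← card_isParentMap l hl]
      exact Nat.card_congr (Equiv.subtypeEquivRight fun P => and_iff_right hl)
    · have : IsEmpty {P // (∀ i, {v | l v = i}.ncard = h i) ∧ IsParentMap (fun v => l v) P} :=
        ⟨fun P => hl P.2.1⟩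
      exact Nat.card_of_isEmpty
  rw [← Nat.card_coe_set_eq]
  refine (Nat.card_congr (Equiv.subtypeProdEquivSigmaSubtype fun (l : V → Fin (r + 1)) P =>
      (∀ i, {v | l v = i}.ncard = h i) ∧ IsParentMap (fun v => l v) P)).trans ?_
  rw [Nat.card_sigma,
    Finset.sum_congr rfl fun l _ => hfiber l, ← Finset.sum_filter, Finset.sum_const, smul_eq_mul,
    Set.ncard_eq_toFinset_card', Set.toFinset_ofPred]

lemma lt_of_ncard_fiber [Finite V] {f : V → ℕ} (hf : ∀ i, {v | f v = i}.ncard = h i)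
    (hz : ∀ j, r < j → h j = 0) (v : V) : f v < r + 1 := by
  by_contra hv
  exact ((Set.ncard_pos (s := {w | f w = f v}) (Set.toFinite _)).2 ⟨v, rfl⟩).ne'
    ((hf (f v)).trans (hz _ (by omega)))

lemma ncard_fiber_fin_iff [Finite V] (hz : ∀ j, r < j → h j = 0) (l : V → Fin (r + 1)) :
    (∀ i, {v | l v = i}.ncard = h i) ↔ ∀ i : ℕ, {v | (l v : ℕ) = i}.ncard = h i := by
  constructor
  · intro hl i
    by_cases hi : i < r + 1
    · simpa [Fin.ext_iff] using hl ⟨i, hi⟩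
    · rw [hz i (by omega), Set.ncard_eq_zero]
      ext v
      simp only [Set.mem_ofPred_eq, Set.mem_empty_iff_false, iff_false]
      exact fun hv => hi (hv ▸ (l v).isLt)
  · intro hl i
    simpa [Fin.ext_iff] using hl i

/-- A rooted tree is encoded by its distance-to-root function and its parent map. -/
theorem ncard_rootedTrees_eq [Finite V] (h0 : h 0 = 1) (hz : ∀ j, r < j → h j = 0) :
    {p : SimpleGraph V × V | p.1.IsTree ∧ ∀ i, {v | p.1.dist p.2 v = i}.ncard = h i}.ncard
      = {q : (V → Fin (r + 1)) × (V → V) |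
          (∀ i, {v | q.1 v = i}.ncard = h i) ∧ IsParentMap (fun v => q.1 v) q.2}.ncard := by
  refine Set.ncard_congr (fun p hp =>
    (fun v => ⟨p.1.dist p.2 v, lt_of_ncard_fiber hp.2 hz v⟩, p.1.parent p.2)) ?_ ?_ ?_
  · rintro ⟨G, rt⟩ ⟨hG, hprof⟩
    exact ⟨(ncard_fiber_fin_iff hz _).2 hprof, hG.connected.isParentMap_parent rt⟩
  · intro a b ha hb hfg
    obtain ⟨hdist, hpar⟩ := Prod.mk.inj hfg
    have hrt : a.2 = b.2 := by
      have := congrArg (fun l : V → Fin (r + 1) => (l b.2 : ℕ)) hdist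
      simp only [SimpleGraph.dist_self] at this
      exact ha.1.connected.dist_eq_zero_iff.1 this
    refine Prod.ext ?_ hrt
    calc a.1 = parentGraph (a.1.parent a.2) := ha.1.parentGraph_parent.symm
      _ = parentGraph (b.1.parent b.2) := by rw [hpar]
      _ = b.1 := hb.1.parentGraph_parent
  · intro q ⟨hl, hP⟩
    obtain ⟨rt, hrt⟩ := Set.ncard_eq_one.1 ((hl 0).trans h0)
    have hroot : ∀ v, (q.1 v : ℕ) = 0 ↔ v = rt := fun v => by
      rw [← Set.mem_singleton_iff (a := v), ← hrt]
      exact Fin.val_eq_zero_iff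
    refine ⟨(parentGraph q.2, rt), ⟨hP.isTree hroot, ?_⟩, ?_⟩
    · simpa only [hP.dist_eq_level hroot] using (ncard_fiber_fin_iff hz q.1).1 hl
    · refine Prod.ext (funext fun v => Fin.ext (hP.dist_eq_level hroot v)) ?_
      exact hP.parent_parentGraph hroot

end Counting

lemma prod_fin_succ_eq_prod_Icc {M : Type*} [CommMonoid M] (f : ℕ → M) (hf : f 0 = 1) (n : ℕ) :
    ∏ i : Fin (n + 1), f i = ∏ i ∈ Finset.Icc 1 n, f i := by
  rw [Fin.prod_univ_eq_prod_range, Finset.range_eq_Ico,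
    Finset.prod_eq_prod_Ico_succ_bot (Nat.succ_pos n), hf, one_mul]
  rfl

theorem cayley_horizontal_profile_general
    (r : ℕ) (h : ℕ → ℕ) (h0 : h 0 = 1)
    (hz : ∀ j, r < j → h j = 0)
    (N : ℕ) (hN : N = ∑ i ∈ Finset.range (r + 1), h i) :
    {p : SimpleGraph (Fin N) × Fin N | p.1.IsTree ∧
        ∀ i : ℕ, {v : Fin N | p.1.dist p.2 v = i}.ncard = h i}.ncard
      * ∏ i ∈ Finset.Icc 1 r, (h i).factorial =
    N.factorial * ∏ i ∈ Finset.Icc 1 (r - 1), h i ^ h (i + 1) := by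
  have hlevels := ncard_fiberCard_eq_mul_prod_factorial (α := Fin N) (fun i : Fin (r + 1) => h i)
    (by rw [Nat.card_fin, hN, Fin.sum_univ_eq_sum_range])
  have hparents :
      ∏ i : Fin r, h i ^ h (i + 1) = ∏ i ∈ Finset.Icc 1 (r - 1), h i ^ h (i + 1) := by
    cases r with
    | zero => rfl
    | succ n => exact prod_fin_succ_eq_prod_Icc (fun i => h i ^ h (i + 1)) (by simp [h0]) n
  rw [Nat.card_fin, prod_fin_succ_eq_prod_Icc (fun i => (h i)!) (by simp [h0])] at hlevels
  rw [ncard_rootedTrees_eq h0 hz, ncard_profile_isParentMap, ← hlevels, hparents]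
  ring

/-- The number of rooted Cayley trees on `{1, …, N}` with horizontal
profile `(1, h 1, …, h r)` — exactly `h i` vertices at distance `i` from the root —
equals `N! / (h 1 ! ⋯ h r !) * ∏_{i=1}^{r-1} (h i) ^ (h (i+1))`, stated here with
denominators cleared. -/
theorem cayley_horizontal_profile
    (r : ℕ) (h : ℕ → ℕ) (h0 : h 0 = 1)
    (hpos : ∀ i ≤ r, 0 < h i) (hz : ∀ j, r < j → h j = 0)
    (N : ℕ) (hN : N = ∑ i ∈ Finset.range (r + 1), h i) :
    {p : SimpleGraph (Fin N) × Fin N | p.1.IsTree ∧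
        ∀ i : ℕ, {v : Fin N | p.1.dist p.2 v = i}.ncard = h i}.ncard
      * ∏ i ∈ Finset.Icc 1 r, (h i).factorial =
    N.factorial * ∏ i ∈ Finset.Icc 1 (r - 1), h i ^ h (i + 1) :=
  cayley_horizontal_profile_general r h h0 hz N hN
end

section
/- Let n_0, ..., n_r be positive integers, V = ⋃_{i=0}^r V_i with V_i = {i^1, ..., i^{n_i}}, and S ⊆ Z with max S = 1. The number of functions f : V \ {0^1} → V such that f maps V_i into ⋃_{s∈S} V_{i-s}, f is injective on each V_i, and f(i^1) = (i-1)^1 for 1 ≤ i ≤ r, equals C(Σ_{s∈S} n_{-s}, n_0 - 1) · ∏_{i=1}^r C(Σ_{s∈S} n_{i-s} - 1, n_i - 1) · ∏_{i=0}^r (n_i - 1)!, where n_j = 0 for j < 0 or j > r. -/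
/-!
Restricting an `S`-injection `f` to the blocks splits it into independent pieces: for each `i`,
an injection of `V_i` (of `V_0 \ {0^1}` when `i = 0`) into `T_i = ⋃_{s ∈ S} V_{i-s}`, a set of
size `∑_{s ∈ S} n_{i-s}`, with the value at `i^1` prescribed to be `(i-1)^1 ∈ T_i` (as `1 ∈ S`)
when `i ≥ 1`. Injections of an `m`-set into an `N`-set number `N! / (N-m)! = C(N, m) m!`, and
prescribing one value leaves the injections of the remaining `m - 1` points into `N - 1` points.
-/

namespace Function.Embedding

variable {α β : Type*}

def subtypeApplyEqEquiv [DecidableEq α] (a : α) (b : β) :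
    {g : α ↪ β // g a = b} ≃ ({x // x ≠ a} ↪ {y // y ≠ b}) where
  toFun g := g.1.subtypeMap fun _ hx h => hx (g.1.injective (h.trans g.2.symm))
  invFun h := ⟨(Equiv.optionSubtypeNe a).symm.toEmbedding.trans
      (optionElim (h.trans (.subtype _)) b (by simp [(h _).2])), by simp⟩
  left_inv g := by
    ext x
    by_cases hx : x = a
    · subst hx; simp [g.2]
    · simp [Embedding.subtypeMap, Subtype.map, Equiv.optionSubtypeNe_symm_of_ne hx]
  right_inv h := by
    ext x
    simp [Embedding.subtypeMap, Subtype.map, Equiv.optionSubtypeNe_symm_of_ne x.2]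

theorem card_subtype_apply_eq [Fintype α] [Fintype β] [DecidableEq α] [DecidableEq β]
    (a : α) (b : β) :
    Nat.card {g : α ↪ β // g a = b} =
      (Fintype.card β - 1).descFactorial (Fintype.card α - 1) := by
  rw [Nat.card_congr (subtypeApplyEqEquiv a b), Nat.card_eq_fintype_card,
    Fintype.card_embedding_eq, Fintype.card_subtype_compl, Fintype.card_subtype_compl]
  simp

end Function.Embedding

namespace SInjection

open Finset

variable (S : Finset ℤ) (r : ℤ) (n : ℤ → ℕ)

abbrev Vertex : Type := {v : ℤ × ℕ // 0 ≤ v.1 ∧ v.1 ≤ r ∧ 1 ≤ v.2 ∧ v.2 ≤ n v.1}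

abbrev Source : Type :=
  {v : ℤ × ℕ // (0 ≤ v.1 ∧ v.1 ≤ r ∧ 1 ≤ v.2 ∧ v.2 ≤ n v.1) ∧ v ≠ ((0 : ℤ), (1 : ℕ))}

def IsSInjection (f : Source r n → Vertex r n) : Prop :=
  (∀ v, v.1.1 - (f v).1.1 ∈ S) ∧
    (∀ v w, v.1.1 = w.1.1 → f v = f w → v = w) ∧
    (∀ v, 1 ≤ v.1.1 → v.1.2 = 1 → ((f v) : ℤ × ℕ) = (v.1.1 - 1, 1))

/-- The superscripts `j` of the vertices `i^j` of `V \ {0^1}`. -/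
def labels (i : ℤ) : Finset ℕ :=
  if i = 0 then Icc 2 (n 0) else Icc 1 (n i)

def targets (i : ℤ) : Finset (ℤ × ℕ) :=
  S.biUnion fun s => (Icc 1 (n (i - s))).image fun j => (i - s, j)

def BlockMap (i : ℤ) : Type :=
  {g : labels n i ↪ targets S n i //
    ∀ j : labels n i, 1 ≤ i → (j : ℕ) = 1 → (g j : ℤ × ℕ) = (i - 1, 1)}

variable {S r n}

lemma mem_labels {i : ℤ} {j : ℕ} :
    j ∈ labels n i ↔ (1 ≤ j ∧ j ≤ n i) ∧ (i, j) ≠ ((0 : ℤ), (1 : ℕ)) := by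
  unfold labels
  split_ifs with h <;> simp [h]
  omega

lemma card_labels (i : ℤ) : #(labels n i) = if i = 0 then n 0 - 1 else n i := by
  unfold labels
  split_ifs <;> simp

lemma mk_mem_targets {i s : ℤ} {j : ℕ} (hs : s ∈ S) (hj : 1 ≤ j ∧ j ≤ n (i - s)) :
    (i - s, j) ∈ targets S n i :=
  mem_biUnion.2 ⟨s, hs, mem_image.2 ⟨j, mem_Icc.2 hj, rfl⟩⟩

lemma mem_targets (hzero : ∀ i : ℤ, i < 0 ∨ r < i → n i = 0) {i : ℤ} {w : ℤ × ℕ} :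
    w ∈ targets S n i ↔ (0 ≤ w.1 ∧ w.1 ≤ r ∧ 1 ≤ w.2 ∧ w.2 ≤ n w.1) ∧ i - w.1 ∈ S := by
  constructor
  · simp only [targets, mem_biUnion, mem_image, mem_Icc]
    rintro ⟨s, hs, j, hj, rfl⟩
    have hin : 0 ≤ i - s ∧ i - s ≤ r := by
      by_contra h
      have := hzero (i - s) (by omega)
      omega
    exact ⟨⟨hin.1, hin.2, hj⟩, by simpa using hs⟩
  · rintro ⟨⟨-, -, hw⟩, hs⟩
    simpa using mk_mem_targets (i := i) (j := w.2) hs (by simpa using hw)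

lemma card_targets (i : ℤ) : #(targets S n i) = ∑ s ∈ S, n (i - s) := by
  rw [targets, card_biUnion]
  · exact sum_congr rfl fun s _ => by simp [card_image_of_injective _ (Prod.mk_right_injective _)]
  · intro s _ t _ hst
    simp only [disjoint_left, mem_image]
    rintro _ ⟨j, -, rfl⟩ ⟨k, -, h⟩
    exact hst (by simpa using (congrArg Prod.fst h).symm)

variable (n) in
def toSource (i : Icc 0 r) (j : labels n i) : Source r n :=
  ⟨(i, j), by
    obtain ⟨h0, hr⟩ := mem_Icc.1 i.2
    obtain ⟨hj, hne⟩ := mem_labels.1 j.2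
    exact ⟨⟨h0, hr, hj⟩, hne⟩⟩

def blockOf (v : Source r n) : Icc 0 r := ⟨v.1.1, mem_Icc.2 ⟨v.2.1.1, v.2.1.2.1⟩⟩

def labelOf (v : Source r n) : labels n (blockOf v) :=
  ⟨v.1.2, mem_labels.2 ⟨v.2.1.2.2, v.2.2⟩⟩

def equivPiBlockMap (hzero : ∀ i : ℤ, i < 0 ∨ r < i → n i = 0) :
    {f // IsSInjection S r n f} ≃ ∀ i : Icc 0 r, BlockMap S n i where
  toFun f i :=
    ⟨⟨fun j => ⟨f.1 (toSource n i j), (mem_targets hzero).2 ⟨(f.1 _).2, f.2.1 (toSource n i j)⟩⟩,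
      fun j k h => by
        have := f.2.2.1 (toSource n i j) (toSource n i k) rfl (Subtype.ext (Subtype.mk.inj h))
        exact Subtype.ext (congrArg (·.1.2) this)⟩,
      fun j hi hj => f.2.2.2 (toSource n i j) hi hj⟩
  invFun G :=
    ⟨fun v => ⟨(G (blockOf v)).1 (labelOf v), ((mem_targets hzero).1 ((G _).1 _).2).1⟩,
      fun v => ((mem_targets hzero).1 ((G (blockOf v)).1 (labelOf v)).2).2,
      by
        rintro ⟨⟨a, j⟩, hv⟩ ⟨⟨b, k⟩, hw⟩ (rfl : a = b) h
        have := (G _).1.injective (Subtype.ext (Subtype.mk.inj h))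
        exact Subtype.ext (Prod.ext rfl (congrArg Subtype.val this)),
      fun v hv hv1 => (G (blockOf v)).2 (labelOf v) hv hv1⟩
  left_inv _ := rfl
  right_inv _ := rfl

lemma card_blockMap_zero :
    Nat.card (BlockMap S n 0) = (∑ s ∈ S, n (-s)).descFactorial (n 0 - 1) := by
  have e : BlockMap S n 0 ≃ (labels n 0 ↪ targets S n 0) :=
    Equiv.subtypeUnivEquiv fun _ _ h => absurd h (by norm_num)
  rw [Nat.card_congr e, Nat.card_eq_fintype_card, Fintype.card_embedding_eq, Fintype.card_coe,
    Fintype.card_coe, card_targets, card_labels]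
  simp

lemma card_blockMap_of_one_le (h1S : 1 ∈ S) {i : ℤ} (hi : 1 ≤ i) (hni : 0 < n i)
    (hni1 : 0 < n (i - 1)) :
    Nat.card (BlockMap S n i) = (∑ s ∈ S, n (i - s) - 1).descFactorial (n i - 1) := by
  let one : labels n i := ⟨1, mem_labels.2 ⟨⟨le_rfl, hni⟩, by simp; omega⟩⟩
  let prev : targets S n i := ⟨(i - 1, 1), mk_mem_targets h1S ⟨le_rfl, hni1⟩⟩
  have e : BlockMap S n i ≃ {g : labels n i ↪ targets S n i // g one = prev} :=
    Equiv.subtypeEquivRight fun g =>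
      ⟨fun h => Subtype.ext (h one hi rfl), fun h j _ hj => by
        rw [show j = one from Subtype.ext hj, h]⟩
  rw [Nat.card_congr e, Function.Embedding.card_subtype_apply_eq, Fintype.card_coe,
    Fintype.card_coe, card_targets, card_labels, if_neg (by omega)]

end SInjection

theorem S_injections_count_general
    (S : Finset ℤ) (h1S : 1 ∈ S)
    (r : ℤ) (hr : 0 ≤ r) (n : ℤ → ℕ)
    (hpos : ∀ i ∈ Finset.Icc 0 r, 0 < n i)
    (hzero : ∀ i : ℤ, i < 0 ∨ r < i → n i = 0) :
    {f : {v : ℤ × ℕ // (0 ≤ v.1 ∧ v.1 ≤ r ∧ 1 ≤ v.2 ∧ v.2 ≤ n v.1) ∧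
            v ≠ ((0 : ℤ), (1 : ℕ))} →
         {v : ℤ × ℕ // 0 ≤ v.1 ∧ v.1 ≤ r ∧ 1 ≤ v.2 ∧ v.2 ≤ n v.1} |
        (∀ v, v.1.1 - (f v).1.1 ∈ S) ∧
        (∀ v w, v.1.1 = w.1.1 → f v = f w → v = w) ∧
        (∀ v, 1 ≤ v.1.1 → v.1.2 = 1 → ((f v) : ℤ × ℕ) = (v.1.1 - 1, 1))}.ncard =
    Nat.choose (∑ s ∈ S, n (-s)) (n 0 - 1) *
      (∏ i ∈ Finset.Icc 1 r, Nat.choose ((∑ s ∈ S, n (i - s)) - 1) (n i - 1)) *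
      ∏ i ∈ Finset.Icc 0 r, (n i - 1).factorial := by
  have hblock : ∀ i ∈ Finset.Icc 1 r, Nat.card (SInjection.BlockMap S n i) =
      (∑ s ∈ S, n (i - s) - 1).descFactorial (n i - 1) := by
    intro i hi
    obtain ⟨h1i, hir⟩ := Finset.mem_Icc.1 hi
    exact SInjection.card_blockMap_of_one_le h1S h1i (hpos i (Finset.mem_Icc.2 ⟨by omega, hir⟩))
      (hpos (i - 1) (Finset.mem_Icc.2 ⟨by omega, by omega⟩))
  rw [← Nat.card_coe_set_eq]
  refine (Nat.card_congr (SInjection.equivPiBlockMap (S := S) hzero)).trans ?_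
  rw [Nat.card_pi,
    Finset.prod_coe_sort (Finset.Icc 0 r) fun i => Nat.card (SInjection.BlockMap S n i),
    ← Finset.insert_Icc_add_one_left_eq_Icc hr, zero_add, Finset.prod_insert (by simp),
    Finset.prod_insert (by simp), SInjection.card_blockMap_zero, Finset.prod_congr rfl hblock]
  simp only [Nat.descFactorial_eq_factorial_mul_choose, Finset.prod_mul_distrib]
  ring

/-- With `V = ⋃_{i=0}^r V i`, `|V i| = n i`, the number of functions
`f : V \ {0^1} → V` mapping each `V i` into `⋃_{s ∈ S} V (i - s)`, injective on each
`V i`, with `f (i^1) = (i-1)^1` for `1 ≤ i ≤ r`, equals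
`C(∑_{s∈S} n (-s), n 0 - 1) * ∏_{i=1}^r C(∑_{s∈S} n (i-s) - 1, n i - 1)
  * ∏_{i=0}^r (n i - 1)!`. -/
theorem S_injections_count
    (S : Finset ℤ) (h1S : 1 ∈ S) (hSle : ∀ s ∈ S, s ≤ 1)
    (r : ℤ) (hr : 0 ≤ r) (n : ℤ → ℕ)
    (hpos : ∀ i ∈ Finset.Icc 0 r, 0 < n i)
    (hzero : ∀ i : ℤ, i < 0 ∨ r < i → n i = 0) :
    {f : {v : ℤ × ℕ // (0 ≤ v.1 ∧ v.1 ≤ r ∧ 1 ≤ v.2 ∧ v.2 ≤ n v.1) ∧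
            v ≠ ((0 : ℤ), (1 : ℕ))} →
         {v : ℤ × ℕ // 0 ≤ v.1 ∧ v.1 ≤ r ∧ 1 ≤ v.2 ∧ v.2 ≤ n v.1} |
        (∀ v, v.1.1 - (f v).1.1 ∈ S) ∧
        (∀ v w, v.1.1 = w.1.1 → f v = f w → v = w) ∧
        (∀ v, 1 ≤ v.1.1 → v.1.2 = 1 → ((f v) : ℤ × ℕ) = (v.1.1 - 1, 1))}.ncard =
    Nat.choose (∑ s ∈ S, n (-s)) (n 0 - 1) *
      (∏ i ∈ Finset.Icc 1 r, Nat.choose ((∑ s ∈ S, n (i - s)) - 1) (n i - 1)) *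
      ∏ i ∈ Finset.Icc 0 r, (n i - 1).factorial :=
  S_injections_count_general S h1S r hr n hpos hzero
end

section
/- Let S ⊆ Z with max S = 1, let ℓ ≤ 0 ≤ r and define the directed graph G on vertex set {ℓ, ..., r} with an arc from i to j iff i - j ∈ S. Let y_ℓ, ..., y_r be indeterminates (y_j = 0 outside [ℓ, r]). Define P = Σ_C (-1)^{|C|} ∏_{i=ℓ}^r ((Σ_{s∈S} y_{i-s})^{[i ∉ C]} · (y_i - [i=0])^{[i ∈ C]}), where C ranges over sets of vertex-disjoint elementary directed cycles of G and |C| is the number of cycles. If |ℓ| + r > 0 and (min S = -1 or ℓ = 0), then P = (Σ_{s∈S} y_{-s}) · ∏_{i=ℓ+1}^{r-1} y_i. -/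
/-- `Yvar ℓ r j` is the indeterminate `y j` for `ℓ ≤ j ≤ r`, and `0` otherwise. -/
noncomputable def Yvar (ℓ r : ℤ) (j : ℤ) : MvPolynomial ℤ ℤ :=
  if ℓ ≤ j ∧ j ≤ r then MvPolynomial.X j else 0

/-!
Let `M` be the matrix, `D i = Σ_{s∈S} y_{i-s}` and `y = (y_ℓ, …, y_r)`. Since
`Σ_j [i - j ∈ S] y_j = D i`, row `i` of `M y` is `D i y_i - (y_i - [i=0]) D i`,
so `M y = D 0 · e₀`. Cramer's rule in column `r` then gives `y_r det M = D 0 · det M'`, where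
`M'` is `M` with column `r` replaced by `e₀`. When `ℓ = 0`, `M` is upper Hessenberg (because
`max S = 1`) with subdiagonal entries `-y_i`, so a cyclic shift of the columns makes `M'`
triangular and `det M' = ∏_{ℓ<i≤r} y_i`. When `S ⊆ {-1, 0, 1}` contains `±1`, unimodular
row operations turn `M` into a matrix with the same two properties but with `e_ℓ` in place of
`e₀`. Cancelling `y_r` gives the result.
-/

open Matrix Finset

theorem Matrix.det_eq_prod_subdiag_of_hessenberg {R : Type*} [CommRing R] {n : ℕ}
    (B : Matrix (Fin (n + 1)) (Fin (n + 1)) R)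
    (hlast : ∀ i, B i (Fin.last n) = if i = 0 then 1 else 0)
    (hzero : ∀ i j : Fin (n + 1), (j : ℕ) + 1 < i → B i j = 0) :
    B.det = ∏ p : Fin n, -B p.succ p.castSucc := by
  set σ : Equiv.Perm (Fin (n + 1)) := (finRotate (n + 1)).symm
  have hσ0 : σ 0 = Fin.last n := by
    rw [Equiv.symm_apply_eq, finRotate_last]
  have hσsucc (p : Fin n) : σ p.succ = p.castSucc := by
    rw [Equiv.symm_apply_eq, finRotate_apply, Fin.coeSucc_eq_succ]
  have htri : (B.submatrix id σ).IsUpperTriangular := by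
    intro i j hji
    cases j using Fin.cases with
    | zero => rw [submatrix_apply, hσ0, hlast, if_neg (Fin.pos_iff_ne_zero.1 hji)]
    | succ p =>
      rw [submatrix_apply, hσsucc]
      exact hzero _ _ (by simpa [Fin.lt_def] using hji)
  have hsign : ((Equiv.Perm.sign σ : ℤ) : R) = (-1) ^ n := by
    simp [σ, sign_finRotate]
  have h := det_permute' σ B
  rw [det_of_isUpperTriangular htri, Fin.prod_univ_succ, hsign] at h
  simp only [submatrix_apply, id, hσ0, hσsucc, hlast, if_pos, one_mul] at h
  rw [Finset.prod_neg, h, card_univ, Fintype.card_fin, ← mul_assoc, ← pow_add, ← two_mul,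
    pow_mul, neg_one_sq, one_pow, one_mul]

abbrev IntIcc (ℓ r : ℤ) := {x : ℤ // x ∈ Icc ℓ r}

namespace IntIcc

variable {R : Type*} [CommRing R] {ℓ r : ℤ}

def matrix (ℓ r : ℤ) (F : ℤ → ℤ → R) : Matrix (IntIcc ℓ r) (IntIcc ℓ r) R :=
  of fun i j => F i j

def equivFin (h : ℓ ≤ r) : Fin ((r - ℓ).toNat + 1) ≃ IntIcc ℓ r where
  toFun p := ⟨ℓ + p, by grind⟩
  invFun x := ⟨(x - ℓ).toNat, by grind⟩
  left_inv p := by ext; simp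
  right_inv x := by ext; grind

@[simp]
lemma coe_equivFin (h : ℓ ≤ r) (p : Fin ((r - ℓ).toNat + 1)) :
    (equivFin h p : ℤ) = ℓ + p := rfl

lemma sum_ite_coe_eq {M : Type*} [AddCommMonoid M] (a : ℤ) (f : ℤ → M) :
    ∑ k : IntIcc ℓ r, (if (k : ℤ) = a then f k else 0) =
      if a ∈ Icc ℓ r then f a else 0 := by
  rw [sum_coe_sort (Icc ℓ r) fun k => if k = a then f k else 0, sum_ite_eq']

lemma prod_fin_eq_prod_Icc {M : Type*} [CommMonoid M] (f : ℤ → M) :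
    ∏ p : Fin (r - ℓ).toNat, f (ℓ + 1 + p) = ∏ i ∈ Icc (ℓ + 1) r, f i := by
  rw [Fin.prod_univ_eq_prod_range (fun p => f (ℓ + 1 + p))]
  refine prod_nbij' (fun p => ℓ + 1 + p) (fun i => (i - (ℓ + 1)).toNat) ?_ ?_ ?_ ?_ ?_ <;>
    intros <;> simp_all <;> omega

lemma det_updateCol_top_eq_prod (h : ℓ ≤ r) (A : Matrix (IntIcc ℓ r) (IntIcc ℓ r) R)
    (f : ℤ → R) (hzero : ∀ i j : IntIcc ℓ r, (j : ℤ) + 1 < i → A i j = 0)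
    (hsub : ∀ i j : IntIcc ℓ r, (j : ℤ) + 1 = i → A i j = -f i) :
    (A.updateCol ⟨r, by simpa⟩ (fun i => if (i : ℤ) = ℓ then 1 else 0)).det =
      ∏ i ∈ Icc (ℓ + 1) r, f i := by
  have he : equivFin h (Fin.last _) = ⟨r, by simpa⟩ := by ext; simp; omega
  rw [← det_submatrix_equiv_self (equivFin h), det_eq_prod_subdiag_of_hessenberg,
    ← prod_fin_eq_prod_Icc]
  · refine prod_congr rfl fun p _ => ?_
    rw [submatrix_apply, updateCol_ne, hsub _ _ (by simp; ring), neg_neg]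
    · rw [coe_equivFin, Fin.val_succ]; push_cast; ring_nf
    · intro hp; simp [Subtype.ext_iff] at hp; omega
  · intro i
    rw [submatrix_apply, he, updateCol_self]
    simp only [coe_equivFin, add_eq_left, Nat.cast_eq_zero, Fin.val_eq_zero_iff]
  · intro i j hij
    rw [submatrix_apply, updateCol_ne, hzero _ _ (by simp; omega)]
    intro hj; simp [Subtype.ext_iff] at hj; omega

lemma mul_det_eq_of_mulVec_eq (h : ℓ ≤ r) (A : Matrix (IntIcc ℓ r) (IntIcc ℓ r) R)
    (y : ℤ → R) (c : R) (hzero : ∀ i j : IntIcc ℓ r, (j : ℤ) + 1 < i → A i j = 0)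
    (hsub : ∀ i j : IntIcc ℓ r, (j : ℤ) + 1 = i → A i j = -y i)
    (hvec : A *ᵥ (fun k => y k) = fun i : IntIcc ℓ r => if (i : ℤ) = ℓ then c else 0) :
    y r * A.det = c * ∏ i ∈ Icc (ℓ + 1) r, y i := by
  have hcramer : cramer A (A *ᵥ fun k => y k) = A.det • fun k : IntIcc ℓ r => y k := by
    rw [cramer_eq_adjugate_mulVec, mulVec_mulVec, adjugate_mul, smul_mulVec, one_mulVec]
  have hrhs : (fun i : IntIcc ℓ r => if (i : ℤ) = ℓ then c else 0) =
      c • fun i : IntIcc ℓ r => if (i : ℤ) = ℓ then 1 else 0 := by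
    ext i; simp
  have := congrFun hcramer (⟨r, by simpa⟩ : IntIcc ℓ r)
  rw [hvec, hrhs, map_smul, Pi.smul_apply, cramer_apply,
    det_updateCol_top_eq_prod h A y hzero hsub] at this
  simpa [mul_comm] using this.symm

section RowOperations

def diffMatrix (ℓ r : ℤ) : Matrix (IntIcc ℓ r) (IntIcc ℓ r) R :=
  matrix ℓ r fun i k => (if k = i then 1 else 0) - if k = i + 1 then 1 else 0

lemma det_diffMatrix : (diffMatrix ℓ r : Matrix _ _ R).det = 1 := by
  rw [det_of_isUpperTriangular]
  · refine prod_eq_one fun i _ => ?_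
    simp [diffMatrix, matrix]
  · intro i k hki
    have : (k : ℤ) < i := hki
    simp only [diffMatrix, matrix, of_apply]
    rw [if_neg (by omega), if_neg (by omega), sub_zero]

lemma diffMatrix_mul (F : ℤ → ℤ → R) (hF : ∀ j ∈ Icc ℓ r, F (r + 1) j = 0) :
    diffMatrix ℓ r * matrix ℓ r F = matrix ℓ r fun i j => F i j - F (i + 1) j := by
  ext i j
  simp only [mul_apply, diffMatrix, matrix, of_apply, sub_mul, ite_mul, one_mul, zero_mul,
    sum_sub_distrib]
  rw [sum_ite_coe_eq _ fun k => F k j, sum_ite_coe_eq _ fun k => F k j, if_pos i.2]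
  split_ifs with h
  · rfl
  · have hi := mem_Icc.1 i.2
    rw [show (i : ℤ) = r by grind, hF j j.2]

def addRowMatrix (ℓ r : ℤ) (p : ℤ → Prop) [DecidablePred p] :
    Matrix (IntIcc ℓ r) (IntIcc ℓ r) R :=
  matrix ℓ r fun i k => (if k = i then 1 else 0) + if p i ∧ k = ℓ then 1 else 0

variable (p : ℤ → Prop) [DecidablePred p]

lemma det_addRowMatrix (hp : ¬p ℓ) : (addRowMatrix ℓ r p : Matrix _ _ R).det = 1 := by
  rw [det_of_isLowerTriangular]
  · refine prod_eq_one fun i _ => ?_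
    simp only [addRowMatrix, matrix, of_apply, if_true]
    rw [if_neg (by rintro ⟨hi, hiℓ⟩; exact hp (hiℓ ▸ hi)), add_zero]
  · intro i k hik
    have : (i : ℤ) < k := hik
    have := (mem_Icc.1 i.2).1
    simp only [addRowMatrix, matrix, of_apply]
    rw [if_neg (by omega), if_neg (by omega), add_zero]

lemma addRowMatrix_mul (h : ℓ ≤ r) (F : ℤ → ℤ → R) :
    addRowMatrix ℓ r p * matrix ℓ r F =
      matrix ℓ r fun i j => F i j + if p i then F ℓ j else 0 := by
  ext i j
  simp only [mul_apply, addRowMatrix, matrix, of_apply, add_mul, ite_mul, one_mul, zero_mul,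
    sum_add_distrib, ite_and]
  rw [sum_ite_coe_eq _ fun k => F k j, if_pos i.2]
  split_ifs
  · rw [sum_ite_coe_eq _ fun k => F k j, if_pos (left_mem_Icc.2 h)]
  · simp

end RowOperations

end IntIcc

lemma Yvar_eq_zero {ℓ r j : ℤ} (h : j ∉ Icc ℓ r) : Yvar ℓ r j = 0 :=
  if_neg (mt mem_Icc.2 h)

lemma Yvar_ne_zero {ℓ r j : ℤ} (h : j ∈ Icc ℓ r) : Yvar ℓ r j ≠ 0 := by
  rw [Yvar, if_pos (mem_Icc.1 h)]
  exact MvPolynomial.X_ne_zero j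

lemma sum_ite_sub_mem_Yvar (S : Finset ℤ) (ℓ r t : ℤ) :
    ∑ k : IntIcc ℓ r, (if t - k ∈ S then Yvar ℓ r k else 0) =
      ∑ s ∈ S, Yvar ℓ r (t - s) := by
  have hY (s : ℤ) :
      Yvar ℓ r (t - s) = ∑ k : IntIcc ℓ r, if (k : ℤ) = t - s then Yvar ℓ r k else 0 := by
    rw [IntIcc.sum_ite_coe_eq]
    split_ifs with h
    · rfl
    · exact Yvar_eq_zero h
  simp_rw [hY, sum_comm (s := S)]
  refine sum_congr rfl fun k _ => ?_
  rw [← sum_ite_eq' S (t - k) fun _ => Yvar ℓ r k]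
  exact sum_congr rfl fun s _ => if_congr (by omega) rfl rfl

noncomputable def cycleEntry (S : Finset ℤ) (ℓ r i j : ℤ) : MvPolynomial ℤ ℤ :=
  (if i = j then ∑ s ∈ S, Yvar ℓ r (i - s) else 0) -
    (Yvar ℓ r i - if i = 0 then 1 else 0) * (if i - j ∈ S then 1 else 0)

lemma matrix_cycleEntry_mulVec (S : Finset ℤ) (ℓ r : ℤ) :
    IntIcc.matrix ℓ r (cycleEntry S ℓ r) *ᵥ (fun k => Yvar ℓ r k) =
      fun i : IntIcc ℓ r => if (i : ℤ) = 0 then ∑ s ∈ S, Yvar ℓ r (-s) else 0 := by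
  funext i
  have hentry (k : IntIcc ℓ r) : cycleEntry S ℓ r i k * Yvar ℓ r k =
      (if i = k then (∑ s ∈ S, Yvar ℓ r (i - s)) * Yvar ℓ r k else 0) -
        (Yvar ℓ r i - if (i : ℤ) = 0 then 1 else 0) *
          if (i : ℤ) - k ∈ S then Yvar ℓ r k else 0 := by
    rw [cycleEntry, sub_mul, mul_assoc, ite_zero_mul, ite_zero_mul, one_mul]
    simp only [Subtype.coe_inj]
  simp only [mulVec, dotProduct, IntIcc.matrix, of_apply, hentry, sum_sub_distrib, sum_ite_eq,
    mem_univ, if_true, ← mul_sum, sum_ite_sub_mem_Yvar]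
  split_ifs with h
  · simp only [h, zero_sub]
    ring
  · ring

section Hessenberg

variable {S : Finset ℤ} {ℓ r i j : ℤ}

lemma cycleEntry_eq_zero (hS : ∀ s ∈ S, s ≤ 1) (h : j + 1 < i) :
    cycleEntry S ℓ r i j = 0 := by
  rw [cycleEntry, if_neg (show i ≠ j by omega),
    if_neg (show i - j ∉ S from fun hij => by have := hS _ hij; omega), mul_zero, sub_zero]

lemma cycleEntry_of_add_one_eq (h1 : 1 ∈ S) (h : j + 1 = i) (hi : i ≠ 0) :
    cycleEntry S ℓ r i j = -Yvar ℓ r i := by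
  rw [cycleEntry, if_neg (show i ≠ j by omega), if_neg hi, show i - j = 1 by omega, if_pos h1]
  ring

end Hessenberg

lemma Yvar_mul_det_cycleEntry_of_zero {S : Finset ℤ} (h1S : 1 ∈ S) (hSle : ∀ s ∈ S, s ≤ 1)
    {r : ℤ} (hr : 0 ≤ r) :
    Yvar 0 r r * (IntIcc.matrix 0 r (cycleEntry S 0 r)).det =
      (∑ s ∈ S, Yvar 0 r (-s)) * ∏ i ∈ Icc (0 + 1) r, Yvar 0 r i :=
  IntIcc.mul_det_eq_of_mulVec_eq hr _ _ _ (fun _ _ h => cycleEntry_eq_zero hSle h)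
    (fun _ j h => cycleEntry_of_add_one_eq h1S h (by have := (mem_Icc.1 j.2).1; omega))
    (matrix_cycleEntry_mulVec S 0 r)

section SubsetIcc

variable {S : Finset ℤ} (h1 : 1 ∈ S) (hm1 : -1 ∈ S) (hS : ∀ s ∈ S, -1 ≤ s ∧ s ≤ 1)
include h1 hm1 hS

lemma ite_mem_eq_of_subset_Icc {R : Type*} [Semiring R] (t : ℤ) :
    (if t ∈ S then (1 : R) else 0) =
      (if t = -1 then 1 else 0) + (if t = 1 then 1 else 0) +
        if 0 ∈ S then (if t = 0 then 1 else 0) else 0 := by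
  by_cases ht : t ∈ S
  · rcases (show t = -1 ∨ t = 0 ∨ t = 1 by grind) with rfl | rfl | rfl <;> simp_all
  · have : t ≠ -1 ∧ t ≠ 1 := ⟨by rintro rfl; exact ht hm1, by rintro rfl; exact ht h1⟩
    simp only [ht, this, if_false]
    split_ifs with h <;> simp_all

lemma sum_eq_of_subset_Icc {M : Type*} [AddCommMonoid M] (g : ℤ → M) :
    ∑ s ∈ S, g s = g (-1) + g 1 + if 0 ∈ S then g 0 else 0 := by
  have hS' : S = (Icc (-1) 1).filter (· ∈ S) := by ext t; simp; grind
  conv_lhs => rw [hS', sum_filter, show Icc (-1 : ℤ) 1 = {-1, 0, 1} by decide]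
  rw [sum_insert (by decide), sum_insert (by decide), sum_singleton, if_pos hm1, if_pos h1]
  abel

end SubsetIcc

noncomputable def bidiagEntry (ℓ r i j : ℤ) : MvPolynomial ℤ ℤ :=
  (if j = i then Yvar ℓ r (i - 1) else 0) - if j = i - 1 then Yvar ℓ r i else 0

lemma cycleEntry_eq_bidiagEntry_sub {S : Finset ℤ} (h1 : 1 ∈ S) (hm1 : -1 ∈ S)
    (hS : ∀ s ∈ S, -1 ≤ s ∧ s ≤ 1) (ℓ r i j : ℤ) :
    cycleEntry S ℓ r i j = bidiagEntry ℓ r i j - bidiagEntry ℓ r (i + 1) j +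
      (if i = 0 then 1 else 0) * if -j ∈ S then 1 else 0 := by
  have hj : (if i = 0 then (1 : MvPolynomial ℤ ℤ) else 0) * (if -j ∈ S then 1 else 0) =
      (if i = 0 then 1 else 0) * (if i - j ∈ S then 1 else 0) := by
    split_ifs <;> simp_all
  rw [hj]
  simp only [cycleEntry, bidiagEntry, ite_mem_eq_of_subset_Icc h1 hm1 hS,
    sum_eq_of_subset_Icc h1 hm1 hS, add_sub_cancel_right, sub_neg_eq_add]
  by_cases h0 : (0 : ℤ) ∈ S <;> simp only [h0, if_true, if_false, add_zero]
  all_goals split_ifs <;> first | omega | ring_nf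

noncomputable def reducedEntry (S : Finset ℤ) (ℓ r i j : ℤ) : MvPolynomial ℤ ℤ :=
  if i = ℓ then (if -j ∈ S then 1 else 0) else bidiagEntry ℓ r i j

section Reduced

variable {S : Finset ℤ} {ℓ r : ℤ}

lemma det_matrix_cycleEntry_eq (h1 : 1 ∈ S) (hm1 : -1 ∈ S)
    (hS : ∀ s ∈ S, -1 ≤ s ∧ s ≤ 1) (hl : ℓ ≤ 0) (hr : 0 ≤ r) :
    (IntIcc.matrix ℓ r (cycleEntry S ℓ r)).det =
      (IntIcc.matrix ℓ r (reducedEntry S ℓ r)).det := by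
  -- Row `i` of `suffixEntry` is the sum of the rows `k ≥ i` of the cycle matrix; subtracting its
  -- row `ℓ` (the column sums) from the rows `ℓ < i ≤ 0` leaves `reducedEntry`.
  set suffixEntry : ℤ → ℤ → MvPolynomial ℤ ℤ := fun i j =>
    bidiagEntry ℓ r i j + (if i ≤ 0 then 1 else 0) * if -j ∈ S then 1 else 0
  have hsuffix : IntIcc.addRowMatrix ℓ r (fun i => ℓ < i ∧ i ≤ 0) *
      IntIcc.matrix ℓ r (reducedEntry S ℓ r) = IntIcc.matrix ℓ r suffixEntry := by
    rw [IntIcc.addRowMatrix_mul _ (by omega)]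
    ext i j
    have hi := mem_Icc.1 i.2
    have hj := mem_Icc.1 j.2
    simp only [IntIcc.matrix, of_apply, reducedEntry, suffixEntry, bidiagEntry]
    by_cases hiℓ : (i : ℤ) = ℓ
    · rw [hiℓ, Yvar_eq_zero (by simp), if_neg (show (j : ℤ) ≠ ℓ - 1 by omega)]
      simp [hl]
    · simp only [if_neg hiℓ]
      split_ifs <;> first | omega | ring_nf
  have hcycle : IntIcc.matrix ℓ r (cycleEntry S ℓ r) =
      IntIcc.diffMatrix ℓ r * IntIcc.matrix ℓ r suffixEntry := by
    rw [IntIcc.diffMatrix_mul]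
    · ext i j
      simp only [IntIcc.matrix, of_apply, suffixEntry, cycleEntry_eq_bidiagEntry_sub h1 hm1 hS]
      split_ifs <;> first | omega | ring_nf
    · intro j hj
      simp only [suffixEntry, bidiagEntry, if_neg (show ¬r + 1 ≤ 0 by omega),
        Yvar_eq_zero (show r + 1 ∉ Icc ℓ r by simp), if_neg (show j ≠ r + 1 by grind)]
      simp
  rw [hcycle, ← hsuffix, det_mul, det_mul, IntIcc.det_diffMatrix,
    IntIcc.det_addRowMatrix _ (by simp), one_mul, one_mul]

lemma reducedEntry_eq_zero (hj : ℓ ≤ j) (h : j + 1 < i) : reducedEntry S ℓ r i j = 0 := by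
  rw [reducedEntry, if_neg (by omega), bidiagEntry, if_neg (by omega), if_neg (by omega), sub_zero]

lemma reducedEntry_of_add_one_eq (hj : ℓ ≤ j) (h : j + 1 = i) :
    reducedEntry S ℓ r i j = -Yvar ℓ r i := by
  rw [reducedEntry, if_neg (by omega), bidiagEntry, if_neg (by omega), if_pos (by omega), zero_sub]

lemma matrix_reducedEntry_mulVec :
    IntIcc.matrix ℓ r (reducedEntry S ℓ r) *ᵥ (fun k => Yvar ℓ r k) =
      fun i : IntIcc ℓ r => if (i : ℤ) = ℓ then ∑ s ∈ S, Yvar ℓ r (-s) else 0 := by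
  funext i
  simp only [mulVec, dotProduct, IntIcc.matrix, of_apply, reducedEntry]
  split_ifs with hi
  · simp_rw [ite_mul, one_mul, zero_mul, ← zero_sub, sum_ite_sub_mem_Yvar]
  · have hi' := mem_Icc.1 i.2
    simp only [bidiagEntry, sub_mul, ite_mul, zero_mul, sum_sub_distrib]
    rw [IntIcc.sum_ite_coe_eq _ fun k => Yvar ℓ r (i - 1) * Yvar ℓ r k,
      IntIcc.sum_ite_coe_eq _ fun k => Yvar ℓ r i * Yvar ℓ r k, if_pos i.2,
      if_pos (mem_Icc.2 ⟨by omega, by omega⟩), mul_comm, sub_self]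

end Reduced

lemma Yvar_mul_det_cycleEntry_of_subset_Icc {S : Finset ℤ} (h1 : 1 ∈ S) (hm1 : -1 ∈ S)
    (hS : ∀ s ∈ S, -1 ≤ s ∧ s ≤ 1) {ℓ r : ℤ} (hl : ℓ ≤ 0) (hr : 0 ≤ r) :
    Yvar ℓ r r * (IntIcc.matrix ℓ r (cycleEntry S ℓ r)).det =
      (∑ s ∈ S, Yvar ℓ r (-s)) * ∏ i ∈ Icc (ℓ + 1) r, Yvar ℓ r i := by
  rw [det_matrix_cycleEntry_eq h1 hm1 hS hl hr]
  exact IntIcc.mul_det_eq_of_mulVec_eq (by omega) _ _ _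
    (fun _ j h => reducedEntry_eq_zero (mem_Icc.1 j.2).1 h)
    (fun _ j h => reducedEntry_of_add_one_eq (mem_Icc.1 j.2).1 h) matrix_reducedEntry_mulVec

/-- The cycle-configuration sum `P` is stated as the determinant of `D - A` with diagonal
`D i = Σ_{s∈S} y_{i-s}` and arc weights `A i j = (y_i - [i=0]) · [i - j ∈ S]`: expanding a
determinant over permutations groups the terms by configurations of cycles of the digraph. -/
theorem cycle_configuration_sum
    (S : Finset ℤ) (h1S : 1 ∈ S) (hSle : ∀ s ∈ S, s ≤ 1)
    (ℓ r : ℤ) (hl : ℓ ≤ 0) (hr : 0 ≤ r) (hlr : ℓ < 0 ∨ 0 < r)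
    (hmin : ((-1 : ℤ) ∈ S ∧ ∀ s ∈ S, -1 ≤ s) ∨ ℓ = 0) :
    Matrix.det (Matrix.of (fun i j : {x : ℤ // x ∈ Finset.Icc ℓ r} =>
      (if (i : ℤ) = (j : ℤ) then ∑ s ∈ S, Yvar ℓ r ((i : ℤ) - s) else 0) -
      (Yvar ℓ r (i : ℤ) - if (i : ℤ) = 0 then 1 else 0) *
        (if (i : ℤ) - (j : ℤ) ∈ S then 1 else 0))) =
    (∑ s ∈ S, Yvar ℓ r (-s)) * ∏ i ∈ Finset.Icc (ℓ + 1) (r - 1), Yvar ℓ r i := by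
  change (IntIcc.matrix ℓ r (cycleEntry S ℓ r)).det = _
  have key : Yvar ℓ r r * (IntIcc.matrix ℓ r (cycleEntry S ℓ r)).det =
      (∑ s ∈ S, Yvar ℓ r (-s)) * ∏ i ∈ Icc (ℓ + 1) r, Yvar ℓ r i := by
    rcases hmin with ⟨hm1, hge⟩ | rfl
    · exact Yvar_mul_det_cycleEntry_of_subset_Icc h1S hm1 (fun s hs => ⟨hge s hs, hSle s hs⟩)
        hl hr
    · exact Yvar_mul_det_cycleEntry_of_zero h1S hSle hr
  have hIcc : Icc (ℓ + 1) r = insert r (Icc (ℓ + 1) (r - 1)) := by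
    ext i; simp only [mem_Icc, mem_insert]; omega
  rw [hIcc, prod_insert (by simp), mul_left_comm] at key
  exact mul_left_cancel₀ (Yvar_ne_zero (by simp; omega)) key
end

section
/- Let S ⊆ Z with max S = 1, ℓ ≤ 0 ≤ r, and let n(i,s) be nonnegative integers for ℓ ≤ i ≤ r, s ∈ S; set n_i = [i=0] + Σ_{s∈S} n(i,s). Let G be the digraph on {ℓ,...,r} with an arc (i, i-s) for each s ∈ S with ℓ ≤ i-s ≤ r. If min S = -1 or ℓ = 0, then Σ_C (-1)^{|C|} ∏_{i ∉ C} n_i · ∏_{(i,i-s) ∈ C} n(i,s) = ∏_{i=ℓ}^{-1} n(i,-1) · ∏_{i=1}^r n(i,1), where C ranges over configurations of vertex-disjoint elementary cycles of G. -/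
/-!
Expanding the determinant over permutations and grouping each permutation into its fixed points
and cycles shows that the cycle-configuration sum is `det (D - A)`, where `D` is the diagonal of
the `n_i` and `A i j = n (i, i - j)` for `i - j ∈ S`. Call this matrix `L`. Row `i ≠ 0` of `L`
sums to zero and row `0` sums to one. Since `max S = 1`, row `i > 0` is supported on `[i - 1, ∞)`.
If `ℓ < 0` then `min S = -1`, so row `i < 0` is supported on `(-∞, i + 1]`.

Replace each column `j` by the sum of the columns `k` with `j ∈ [[0, k]]`. This is right
multiplication by a unitriangular matrix. Afterwards the row-sum and support conditions kill every
entry `(i, j)` with `i ∉ [[0, j]]`. The new matrix is therefore triangular for the tree order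
"`i` lies between `0` and `j`", and the zigzag order `0, -1, 1, -2, 2, …` is a linear refinement of
that order. The new diagonal entry at `i` is the row sum `1` for `i = 0`. For `i ≠ 0` it is minus
the single entry of row `i` one step closer to `0`, namely `n (i, 1)` for `i > 0` and
`n (i, -1)` for `i < 0`.
-/

open Matrix Finset
open scoped FinsetInterval

theorem Matrix.det_of_blockTriangular_injective {m α R : Type*} [Fintype m] [DecidableEq m]
    [CommRing R] [LinearOrder α] {M : Matrix m m R} {b : m → α} (hb : Function.Injective b)
    (h : M.BlockTriangular b) : M.det = ∏ i, M i i :=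
  letI : LinearOrder m := LinearOrder.lift' b hb
  det_of_isUpperTriangular h

def zigzag (i : ℤ) : ℤ := if 0 ≤ i then 2 * i else -2 * i - 1

theorem zigzag_injective : Function.Injective zigzag := by
  intro i j h
  simp only [zigzag] at h
  split_ifs at h <;> omega

theorem zigzag_le_of_mem_uIcc {i j : ℤ} (h : i ∈ [[0, j]]) : zigzag i ≤ zigzag j := by
  rw [mem_uIcc'] at h
  simp only [zigzag]
  split_ifs <;> omega

section
variable {R : Type*} [CommRing R] {s : Finset ℤ}

theorem det_of_forall_mem_uIcc {M : Matrix s s R}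
    (h : ∀ i j, M i j ≠ 0 → (i : ℤ) ∈ [[0, (j : ℤ)]]) : M.det = ∏ i, M i i :=
  det_of_blockTriangular_injective (b := fun i : s => zigzag i)
    (zigzag_injective.comp Subtype.val_injective)
    fun i j hji => by_contra fun hne => hji.not_ge (zigzag_le_of_mem_uIcc (h i j hne))

variable (R s) in
def uIccZeta : Matrix s s R := of fun k j => if (j : ℤ) ∈ [[0, (k : ℤ)]] then 1 else 0

variable (R s) in
theorem det_uIccZeta : (uIccZeta R s).det = 1 := by
  rw [← det_transpose, det_of_forall_mem_uIcc]
  · simp [uIccZeta]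
  · intro i j h
    by_contra hij
    simp only [transpose_apply, uIccZeta, of_apply, if_neg hij] at h
    exact h rfl

theorem mul_uIccZeta_apply (M : Matrix s s R) (i j : s) :
    (M * uIccZeta R s) i j = ∑ k : s with (j : ℤ) ∈ [[0, ↑k]], M i k := by
  simp only [mul_apply, uIccZeta, of_apply, mul_ite, mul_one, mul_zero, sum_filter]

end

section
variable {R : Type*} [AddCommGroup R] {s : Finset ℤ} {f : s → R} {i : ℤ}

theorem sum_filter_mem_uIcc_eq_zero (hsum : ∑ k, f k = 0)
    (hf : ∀ k, f k ≠ 0 → (0 < i → i - 1 ≤ k) ∧ (i < 0 → (k : ℤ) ≤ i + 1)) {j : ℤ}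
    (hij : i ∉ [[0, j]]) : ∑ k : s with j ∈ [[0, ↑k]], f k = 0 := by
  rw [mem_uIcc'] at hij
  by_cases hall : ∀ k, f k ≠ 0 → j ∈ [[0, (k : ℤ)]]
  · rw [sum_filter_of_ne fun k _ hk => hall k hk, hsum]
  · push Not at hall
    obtain ⟨k', hk', hjk'⟩ := hall
    refine sum_eq_zero fun k hk => by_contra fun hk0 => ?_
    rw [mem_filter, mem_uIcc'] at hk
    rw [mem_uIcc'] at hjk'
    have := hf k hk0
    have := hf k' hk'
    omega

theorem sum_filter_mem_uIcc_self (hsum : ∑ k, f k = 0)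
    (hf : ∀ k, f k ≠ 0 → (0 < i → i - 1 ≤ k) ∧ (i < 0 → (k : ℤ) ≤ i + 1)) (p : s)
    (hp : 0 < i ∧ (p : ℤ) = i - 1 ∨ i < 0 ∧ (p : ℤ) = i + 1) :
    ∑ k : s with i ∈ [[0, ↑k]], f k = -f p := by
  have hbelow : ∑ k : s with i ∉ [[0, ↑k]], f k = f p := by
    refine sum_eq_single_of_mem p ?_ fun k hk hkp => by_contra fun hk0 => ?_
    · rw [mem_filter, mem_uIcc']
      exact ⟨mem_univ p, by omega⟩
    · rw [mem_filter, mem_uIcc'] at hk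
      have := hf k hk0
      have : (k : ℤ) ≠ p := fun h => hkp (Subtype.ext h)
      omega
  rw [eq_neg_iff_add_eq_zero, ← hbelow, sum_filter_add_sum_filter_not, hsum]

end

theorem det_eq_prod_sum_filter_mem_uIcc {R : Type*} [CommRing R] {s : Finset ℤ}
    (M : Matrix s s R) (hsum : ∀ i : s, (i : ℤ) ≠ 0 → ∑ k, M i k = 0)
    (hsupp : ∀ i k : s, M i k ≠ 0 →
      (0 < (i : ℤ) → (i : ℤ) - 1 ≤ k) ∧ ((i : ℤ) < 0 → (k : ℤ) ≤ i + 1)) :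
    M.det = ∏ i : s, ∑ k : s with (i : ℤ) ∈ [[0, ↑k]], M i k := by
  rw [← mul_one M.det, ← det_uIccZeta R s, ← det_mul, det_of_forall_mem_uIcc]
  · simp only [mul_uIccZeta_apply]
  · intro i j hij
    by_contra hnot
    rw [mul_uIccZeta_apply] at hij
    have hi0 : (i : ℤ) ≠ 0 := fun h0 => hnot (h0 ▸ left_mem_uIcc)
    exact hij (sum_filter_mem_uIcc_eq_zero (hsum i hi0) (hsupp i) hnot)

theorem sum_Icc_ite_sub_mem {R : Type*} [AddCommMonoid R] (S : Finset ℤ) (g : ℤ → R)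
    {ℓ r i : ℤ} (hg : ∀ t ∈ S, (i - t < ℓ ∨ r < i - t) → g t = 0) :
    ∑ k ∈ Icc ℓ r, (if i - k ∈ S then g (i - k) else 0) = ∑ t ∈ S, g t := by
  have hS {k : ℤ} (hk : (if i - k ∈ S then g (i - k) else 0) ≠ 0) : i - k ∈ S :=
    by_contra fun hS => hk (if_neg hS)
  refine sum_bij_ne_zero (fun k _ _ => i - k) (fun k _ hk => hS hk) ?_ ?_ ?_
  · intro k₁ _ _ k₂ _ _ h
    omega
  · intro t ht hgt
    have hmem : i - t ∈ Icc ℓ r := by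
      rw [mem_Icc]
      by_contra hout
      exact hgt (hg t ht (by omega))
    refine ⟨i - t, hmem, ?_, by ring⟩
    rwa [sub_sub_cancel, if_pos ht]
  · intro k _ hk
    rw [if_pos (hS hk)]

theorem prod_Icc_eq_prod_neg_mul_mul_prod_pos {M : Type*} [CommMonoid M] (f : ℤ → M) {ℓ r : ℤ}
    (hl : ℓ ≤ 0) (hr : 0 ≤ r) :
    ∏ i ∈ Icc ℓ r, f i = (∏ i ∈ Icc ℓ (-1), f i) * f 0 * ∏ i ∈ Icc 1 r, f i := by
  have hsplit : Icc ℓ r = Icc ℓ (-1) ∪ insert 0 (Icc 1 r) := by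
    ext i
    simp only [mem_union, mem_insert, mem_Icc]
    omega
  rw [hsplit, prod_union, prod_insert, mul_assoc]
  · simp
  · exact disjoint_left.2 fun i hi hi' => by simp only [mem_insert, mem_Icc] at hi hi'; omega

def rootedLaplacian (S : Finset ℤ) (ℓ r : ℤ) (n : ℤ → ℤ → ℕ) : Matrix (Icc ℓ r) (Icc ℓ r) ℤ :=
  of fun i j =>
    (if (i : ℤ) = j then (((if (i : ℤ) = 0 then 1 else 0) + ∑ s ∈ S, n i s : ℕ) : ℤ) else 0) -
      (if (i : ℤ) - j ∈ S then (n i (i - j) : ℤ) else 0)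

namespace rootedLaplacian

variable {S : Finset ℤ} {ℓ r : ℤ} {n : ℤ → ℤ → ℕ}

theorem sum_row (hcompat : ∀ i s, s ∈ S → (i - s < ℓ ∨ r < i - s) → n i s = 0)
    (i : Icc ℓ r) : ∑ k, rootedLaplacian S ℓ r n i k = if (i : ℤ) = 0 then 1 else 0 := by
  simp only [rootedLaplacian, of_apply, sum_sub_distrib, Subtype.coe_inj, sum_ite_eq,
    mem_univ, if_true]
  rw [sum_coe_sort (Icc ℓ r) fun k => if (i : ℤ) - k ∈ S then (n i (i - k) : ℤ) else 0,
    sum_Icc_ite_sub_mem S (fun t => (n i t : ℤ)) fun t ht hout => by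
      rw [hcompat i t ht hout, Nat.cast_zero] ]
  push_cast
  ring

theorem apply_of_ne (hSle : ∀ s ∈ S, s ≤ 1) (hSge : ℓ < 0 → ∀ s ∈ S, -1 ≤ s) (i k : Icc ℓ r)
    (hik : rootedLaplacian S ℓ r n i k ≠ 0) :
    (0 < (i : ℤ) → (i : ℤ) - 1 ≤ k) ∧ ((i : ℤ) < 0 → (k : ℤ) ≤ i + 1) := by
  have hi := mem_Icc.1 i.2
  by_cases heq : (i : ℤ) = k
  · omega
  by_cases hS : (i : ℤ) - k ∈ S
  · have := hSle _ hS
    exact ⟨fun _ => by omega, fun hi0 => by have := hSge (by omega) _ hS; omega⟩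
  · simp only [rootedLaplacian, of_apply, if_neg heq, if_neg hS, sub_zero] at hik
    exact absurd rfl hik

theorem apply_of_sub_mem {i j : Icc ℓ r} (hij : (i : ℤ) ≠ j) (hS : (i : ℤ) - j ∈ S) :
    rootedLaplacian S ℓ r n i j = -n i (i - j) := by
  simp only [rootedLaplacian, of_apply, if_neg hij, if_pos hS, zero_sub]

theorem sum_filter_mem_uIcc (h1S : 1 ∈ S) (hSle : ∀ s ∈ S, s ≤ 1) (hl : ℓ ≤ 0) (hr : 0 ≤ r)
    (hneg : ℓ < 0 → (-1 : ℤ) ∈ S ∧ ∀ s ∈ S, -1 ≤ s)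
    (hcompat : ∀ i s, s ∈ S → (i - s < ℓ ∨ r < i - s) → n i s = 0) (i : Icc ℓ r) :
    ∑ k : Icc ℓ r with (i : ℤ) ∈ [[0, ↑k]], rootedLaplacian S ℓ r n i k =
      if (i : ℤ) < 0 then (n i (-1) : ℤ) else if (i : ℤ) = 0 then 1 else n i 1 := by
  have hi := mem_Icc.1 i.2
  have hsum := sum_row hcompat i
  have hsupp := apply_of_ne (n := n) hSle (fun hℓ => (hneg hℓ).2) i
  rcases lt_trichotomy (i : ℤ) 0 with hi0 | hi0 | hi0
  · let p : Icc ℓ r := ⟨i + 1, mem_Icc.2 ⟨by omega, by omega⟩⟩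
    have hip : (i : ℤ) - p = -1 := by simp [p]
    rw [sum_filter_mem_uIcc_self (hsum.trans (if_neg hi0.ne)) hsupp p (Or.inr ⟨hi0, rfl⟩),
      apply_of_sub_mem (by omega) (hip ▸ (hneg (by omega)).1), hip, if_pos hi0, neg_neg]
  · rw [filter_true_of_mem fun k _ => hi0 ▸ left_mem_uIcc, hsum, if_neg hi0.not_lt, if_pos hi0,
      if_pos hi0]
  · let p : Icc ℓ r := ⟨i - 1, mem_Icc.2 ⟨by omega, by omega⟩⟩
    have hip : (i : ℤ) - p = 1 := by simp [p]
    rw [sum_filter_mem_uIcc_self (hsum.trans (if_neg hi0.ne')) hsupp p (Or.inl ⟨hi0, rfl⟩),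
      apply_of_sub_mem (by omega) (hip ▸ h1S), hip, if_neg hi0.not_gt, if_neg hi0.ne', neg_neg]

end rootedLaplacian

/-- Let `n (i, s)` be nonnegative integers for `ℓ ≤ i ≤ r`, `s ∈ S`
(vanishing when the endpoint `i - s` of the corresponding arc leaves `[ℓ, r]`), and
`n_i = [i = 0] + Σ_{s∈S} n (i, s)`.  The sum
`Σ_C (-1)^{|C|} ∏_{i∉C} n_i ∏_{(i,i-s)∈C} n (i, s)` over configurations `C` of
vertex-disjoint elementary cycles of the digraph on `{ℓ, …, r}` with arcs `(i, i-s)`,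
`s ∈ S`, is — by the standard expansion of a determinant into cycle configurations —
the determinant of `D - A` with `D i = n_i` and `A i j = n (i, i - j) · [i - j ∈ S]`.
If `min S = -1` or `ℓ = 0` it equals `∏_{i=ℓ}^{-1} n (i, -1) · ∏_{i=1}^r n (i, 1)`. -/
theorem cycle_configuration_sum_out_types
    (S : Finset ℤ) (h1S : 1 ∈ S) (hSle : ∀ s ∈ S, s ≤ 1)
    (ℓ r : ℤ) (hl : ℓ ≤ 0) (hr : 0 ≤ r)
    (hmin : ((-1 : ℤ) ∈ S ∧ ∀ s ∈ S, -1 ≤ s) ∨ ℓ = 0)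
    (n : ℤ → ℤ → ℕ)
    (hcompat : ∀ i s, s ∈ S → (i - s < ℓ ∨ r < i - s) → n i s = 0) :
    Matrix.det (Matrix.of (fun i j : {x : ℤ // x ∈ Finset.Icc ℓ r} =>
      ((if (i : ℤ) = (j : ℤ) then
          (((if (i : ℤ) = 0 then 1 else 0) + ∑ s ∈ S, n (i : ℤ) s : ℕ) : ℤ)
        else 0) -
       (if (i : ℤ) - (j : ℤ) ∈ S then ((n (i : ℤ) ((i : ℤ) - (j : ℤ)) : ℕ) : ℤ)
        else 0)))) =
    (∏ i ∈ Finset.Icc ℓ (-1), (n i (-1) : ℤ)) *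
      ∏ i ∈ Finset.Icc (1 : ℤ) r, (n i 1 : ℤ) := by
  have hneg : ℓ < 0 → (-1 : ℤ) ∈ S ∧ ∀ s ∈ S, -1 ≤ s := fun hℓ => hmin.resolve_right hℓ.ne
  change (rootedLaplacian S ℓ r n).det = _
  rw [det_eq_prod_sum_filter_mem_uIcc _
      (fun i hi => (rootedLaplacian.sum_row hcompat i).trans (if_neg hi))
      (rootedLaplacian.apply_of_ne hSle fun hℓ => (hneg hℓ).2),
    prod_congr rfl fun i _ => rootedLaplacian.sum_filter_mem_uIcc h1S hSle hl hr hneg hcompat i,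
    prod_coe_sort (Icc ℓ r) fun i => if i < 0 then (n i (-1) : ℤ) else if i = 0 then 1 else n i 1,
    prod_Icc_eq_prod_neg_mul_mul_prod_pos _ hl hr, if_neg (lt_irrefl 0), if_pos rfl, mul_one]
  congr 1 <;> refine prod_congr rfl fun i hi => ?_ <;> rw [mem_Icc] at hi
  · rw [if_pos (by omega)]
  · rw [if_neg (by omega), if_neg (by omega)]
end

section
/- Let S ⊆ Z with max S = 1 and n_0,...,n_r positive. Let n(i,s) be nonnegative integers with n(i,s) = 0 if i - s ∉ [0,r] and n_i = [i=0] + Σ_s n(i,s). The number of functions f : V \ {0^1} → V (V = ⋃ V_i, |V_i| = n_i) satisfying: f(i^1) = (i-1)^1 for 1 ≤ i ≤ r, and for each i, s exactly n(i,s) vertices of V_i are mapped into V_{i-s}, equals (n_r · ∏_{i=0}^r (n_i - 1)! · ∏_{i=0}^r n_i^{c(i)-1} · ∏_{i=1}^r n(i,1)) / ∏_{i,s} n(i,s)!, where c(i) = Σ_s n(i+s, s) is the number of vertices mapped into V_i. -/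
/-!
The vertices `i^1` with `1 ≤ i` are forced to map to `(i-1)^1`, each contributing one vertex of
out-type `(i;1)`; so the functions counted correspond bijectively to arbitrary maps on the free
vertices `i^k`, `k ≥ 2`, with out-type counts `m(i,s) = n(i,s) - [s = 1, 1 ≤ i]`. Such maps split
level by level. On level `i`, distributing the `n_i - 1` free vertices among the out-types is a
multinomial choice (orbit–stabilizer for `Perm` acting on type assignments), and a vertex of
out-type `s` then has `n_{i-s}` possible images. It remains to re-index
`∏ n_{i-s}^{n(i,s)} = ∏ n_i^{c(i)}` and to collect the factors coming from the spine.
-/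

open Equiv MulAction Nat

section FiberCounts

variable {α ι : Type*}

theorem mem_orbit_domMulAct_iff [Finite α] {t₀ t : α → ι} :
    t ∈ orbit (Perm α)ᵈᵐᵃ t₀ ↔ ∀ i, Nat.card {a // t a = i} = Nat.card {a // t₀ a = i} := by
  refine ⟨?_, fun h => ?_⟩
  · rintro ⟨c, rfl⟩ i
    exact Nat.card_congr ((DomMulAct.mk.symm c).subtypeEquiv fun _ => Iff.rfl)
  · have e i : {a // t a = i} ≃ {a // t₀ a = i} := (Finite.card_eq.mp (h i)).some
    exact ⟨DomMulAct.mk (ofFiberEquiv e), funext fun a => ofFiberEquiv_map e a⟩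

variable [Finite α] [Fintype ι]

theorem exists_card_fiber_eq (m : ι → ℕ) (hm : ∑ i, m i = Nat.card α) :
    ∃ t : α → ι, ∀ i, Nat.card {a // t a = i} = m i := by
  obtain ⟨e⟩ : Nonempty (α ≃ Σ i, Fin (m i)) := by
    rw [← Finite.card_eq, Nat.card_sigma]
    simp [hm]
  refine ⟨fun a => (e a).1, fun i => ?_⟩
  rw [Nat.card_congr ((e.subtypeEquiv fun _ => Iff.rfl).trans (sigmaSubtype i))]
  simp

/-- The functions with fiber sizes `m` form one orbit of `Perm α`, and the stabilizer of one of
them permutes each fiber. -/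
theorem card_fun_card_fiber_eq_mul_prod_factorial (m : ι → ℕ) (hm : ∑ i, m i = Nat.card α) :
    Nat.card {t : α → ι // ∀ i, Nat.card {a // t a = i} = m i} * ∏ i, (m i)! = (Nat.card α)! := by
  classical
  have := Fintype.ofFinite α
  obtain ⟨t₀, ht₀⟩ := exists_card_fiber_eq m hm
  have horbit : Nat.card {t : α → ι // ∀ i, Nat.card {a // t a = i} = m i} =
      (stabilizer (Perm α)ᵈᵐᵃ t₀).index := by
    rw [index_stabilizer, ← Nat.card_coe_set_eq]
    exact Nat.card_congr (subtypeEquivRight fun t => by simp only [mem_orbit_domMulAct_iff, ht₀])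
  have hstab : Nat.card (stabilizer (Perm α)ᵈᵐᵃ t₀) = ∏ i, (m i)! := by
    rw [Nat.card_congr (DomMulAct.mk.symm.subtypeEquiv (q := fun σ : Perm α => t₀ ∘ σ = t₀)
        fun _ => DomMulAct.mem_stabilizer_iff),
      Nat.card_eq_fintype_card, DomMulAct.stabilizer_card]
    simp only [← Nat.card_eq_fintype_card, ht₀]
  rw [horbit, ← hstab, mul_comm, Subgroup.card_mul_index, ← Nat.card_perm]
  exact Nat.card_congr DomMulAct.mk.symm

end FiberCounts

theorem card_fun_card_fiber_comp_eq_mul_prod_factorial {α β κ : Type*} [Finite α] [Finite β]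
    (τ : β → κ) (K : Finset κ) (m : κ → ℕ) (hm : ∑ k ∈ K, m k = Nat.card α) :
    Nat.card {g : α → β // (∀ a, τ (g a) ∈ K) ∧ ∀ k ∈ K, Nat.card {a // τ (g a) = k} = m k} *
      ∏ k ∈ K, (m k)! = (Nat.card α)! * ∏ k ∈ K, Nat.card {b // τ b = k} ^ m k := by
  classical
  have := Fintype.ofFinite α
  set T := {t : α → K // ∀ k, Nat.card {a // t a = k} = m k}
  let Φ : {g : α → β // (∀ a, τ (g a) ∈ K) ∧ ∀ k ∈ K, Nat.card {a // τ (g a) = k} = m k} → T :=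
    fun g => ⟨fun a => ⟨τ (g.1 a), g.2.1 a⟩, fun k => by
      rw [← g.2.2 k k.2]
      exact Nat.card_congr (subtypeEquivRight fun _ => Subtype.ext_iff)⟩
  have hfiber (t : T) : {g // Φ g = t} ≃ ∀ a, {b // τ b = t.1 a} :=
    { toFun g a := ⟨g.1.1 a, congrArg Subtype.val (congrFun (congrArg Subtype.val g.2) a)⟩
      invFun h := ⟨⟨fun a => h a, fun a => (h a).2 ▸ (t.1 a).2, fun k hk => by
          rw [← t.2 ⟨k, hk⟩]
          exact Nat.card_congr (subtypeEquivRight fun a => by rw [(h a).2, Subtype.ext_iff])⟩,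
        Subtype.ext (funext fun a => Subtype.ext (h a).2)⟩
      left_inv _ := rfl
      right_inv _ := rfl }
  have hprod (t : T) :
      ∏ a, Nat.card {b // τ b = t.1 a} = ∏ k : K, Nat.card {b // τ b = k} ^ m k := by
    rw [← Finset.prod_fiberwise' Finset.univ t.1 fun k : K => Nat.card {b // τ b = k}]
    refine Finset.prod_congr rfl fun k _ => ?_
    rw [Finset.prod_const, ← t.2 k, Nat.card_eq_fintype_card (α := {a // t.1 a = k}),
      Fintype.card_subtype]
  rw [Nat.card_congr (sigmaFiberEquiv Φ).symm, Nat.card_sigma]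
  simp only [Nat.card_congr (hfiber _), Nat.card_pi, hprod, Finset.sum_const, Finset.card_univ,
    smul_eq_mul, ← Nat.card_eq_fintype_card]
  rw [mul_right_comm, ← Finset.prod_coe_sort K (fun k => (m k)!),
    card_fun_card_fiber_eq_mul_prod_factorial (fun k : K => m k)
      (by rw [Finset.sum_coe_sort K m, hm]),
    Finset.prod_coe_sort K (fun k => Nat.card {b // τ b = k} ^ m k)]

theorem card_fun_fiberwise_eq_prod {α β ι : Type*} [Fintype ι] (q : α → ι)
    (P : ∀ i, ({a // q a = i} → β) → Prop) :
    Nat.card {g : α → β // ∀ i, P i fun a => g a} = ∏ i, Nat.card {h // P i h} := by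
  let e : (α → β) ≃ ∀ i, {a // q a = i} → β :=
    (arrowCongr (sigmaFiberEquiv q).symm (Equiv.refl β)).trans (piCurry fun _ _ => β)
  rw [← Nat.card_pi]
  exact Nat.card_congr ((e.subtypeEquiv (q := fun h => ∀ i, P i (h i)) fun _ => Iff.rfl).trans
    subtypePiEquivPi)

theorem card_levelled_fun_mul_prod_factorial {α β G : Type*} [Finite α] [Finite β]
    [AddCommGroup G] (q : α → G) (p : β → G) (I S : Finset G) (m : G → G → ℕ)
    (hq : ∀ a, q a ∈ I) (hm : ∀ i ∈ I, ∑ s ∈ S, m i s = Nat.card {a // q a = i}) :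
    Nat.card {g : α → β // (∀ a, q a - p (g a) ∈ S) ∧
        ∀ i ∈ I, ∀ s ∈ S, Nat.card {a // q a = i ∧ p (g a) = i - s} = m i s} *
      ∏ i ∈ I, ∏ s ∈ S, (m i s)! =
    ∏ i ∈ I, ((Nat.card {a // q a = i})! * ∏ s ∈ S, Nat.card {b // p b = i - s} ^ m i s) := by
  let q' : α → I := fun a => ⟨q a, hq a⟩
  have hlevel (i : I) : Nat.card {a // q' a = i} = Nat.card {a // q a = i} :=
    Nat.card_congr (subtypeEquivRight fun _ => Subtype.ext_iff)
  have hcount (g : α → β) (i : I) (s : G) :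
      Nat.card {a : {a // q' a = i} // i.1 - p (g a) = s} =
        Nat.card {a // q a = i ∧ p (g a) = i - s} :=
    Nat.card_congr ((subtypeSubtypeEquivSubtypeInter (fun a => q' a = i)
      (fun a => i.1 - p (g a) = s)).trans
        (subtypeEquivRight fun _ => and_congr Subtype.ext_iff (sub_eq_iff_comm.trans eq_comm)))
  let P (i : I) (h : {a // q' a = i} → β) : Prop :=
    (∀ a, i.1 - p (h a) ∈ S) ∧ ∀ s ∈ S, Nat.card {a // i.1 - p (h a) = s} = m i s
  have hcond (g : α → β) : ((∀ a, q a - p (g a) ∈ S) ∧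
      ∀ i ∈ I, ∀ s ∈ S, Nat.card {a // q a = i ∧ p (g a) = i - s} = m i s) ↔
        ∀ i, P i fun a => g a := by
    refine ⟨fun ⟨hS, hm⟩ i => ⟨fun a => ?_, fun s hs => ?_⟩,
      fun h => ⟨fun a => (h (q' a)).1 ⟨a, rfl⟩, fun i hi s hs => ?_⟩⟩
    · rw [← congrArg Subtype.val a.2]
      exact hS a
    · rw [hcount]
      exact hm i i.2 s hs
    · rw [← hcount g ⟨i, hi⟩]
      exact (h ⟨i, hi⟩).2 s hs
  have hlevelwise (i : I) : Nat.card {h // P i h} * ∏ s ∈ S, (m i s)! =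
      (Nat.card {a // q a = i})! * ∏ s ∈ S, Nat.card {b // p b = i - s} ^ m i s := by
    rw [card_fun_card_fiber_comp_eq_mul_prod_factorial (α := {a // q' a = i})
      (fun b => i.1 - p b) S (m i) (by rw [hlevel, hm i i.2]), hlevel]
    congr 2 with s
    exact congrArg (· ^ m i s)
      (Nat.card_congr (subtypeEquivRight fun _ => sub_eq_iff_comm.trans eq_comm))
  rw [Nat.card_congr (subtypeEquivRight hcond), card_fun_fiberwise_eq_prod q' P,
    ← Finset.prod_coe_sort I, ← Finset.prod_mul_distrib, ← Finset.prod_coe_sort I]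
  exact Finset.prod_congr rfl fun i _ => hlevelwise i

/-- The pair `(i, k)` encodes the vertex `i^k`. -/
abbrev Vertex (r : ℤ) (nn : ℤ → ℕ) : Type :=
  {v : ℤ × ℕ // 0 ≤ v.1 ∧ v.1 ≤ r ∧ 1 ≤ v.2 ∧ v.2 ≤ nn v.1}

abbrev PuncturedVertex (r : ℤ) (nn : ℤ → ℕ) : Type :=
  {v : ℤ × ℕ // (0 ≤ v.1 ∧ v.1 ≤ r ∧ 1 ≤ v.2 ∧ v.2 ≤ nn v.1) ∧ v ≠ ((0 : ℤ), (1 : ℕ))}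

abbrev FreeVertex (r : ℤ) (nn : ℤ → ℕ) : Type := {v : Vertex r nn // 2 ≤ v.1.2}

section Vertices

variable {r : ℤ} {nn : ℤ → ℕ}

instance : Finite (Vertex r nn) :=
  Set.Finite.to_subtype <| (Set.finite_Icc ((0 : ℤ), 1) (r, (Finset.Icc 0 r).sup nn)).subset
    fun _ ⟨h0, hr, h1, hn⟩ =>
      ⟨⟨h0, h1⟩, hr, hn.trans (Finset.le_sup (Finset.mem_Icc.mpr ⟨h0, hr⟩))⟩

instance : Finite (PuncturedVertex r nn) :=
  Finite.of_injective (fun v => (⟨v.1, v.2.1⟩ : Vertex r nn))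
    fun _ _ h => Subtype.ext (Subtype.mk.inj h)

theorem Vertex.card_fst_eq_and_le_snd {j : ℤ} (h0 : 0 ≤ j) (hr : j ≤ r) (c : ℕ) (hc : 1 ≤ c) :
    Nat.card {v : Vertex r nn // v.1.1 = j ∧ c ≤ v.1.2} = nn j + 1 - c := by
  rw [← Nat.card_Icc c (nn j), ← Nat.card_eq_finsetCard]
  exact Nat.card_congr
    { toFun := fun ⟨v, hj, hc⟩ => ⟨v.1.2, Finset.mem_Icc.mpr ⟨hc, hj ▸ v.2.2.2.2⟩⟩
      invFun x := ⟨⟨(j, x), h0, hr, hc.trans (Finset.mem_Icc.mp x.2).1, (Finset.mem_Icc.mp x.2).2⟩,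
        rfl, (Finset.mem_Icc.mp x.2).1⟩
      left_inv := by rintro ⟨⟨⟨i, k⟩, hv⟩, rfl, hk⟩; rfl
      right_inv _ := rfl }

theorem Vertex.card_fst_eq {j : ℤ} (h0 : 0 ≤ j) (hr : j ≤ r) :
    Nat.card {v : Vertex r nn // v.1.1 = j} = nn j := by
  rw [← Nat.add_sub_cancel (nn j) 1, ← card_fst_eq_and_le_snd h0 hr 1 le_rfl]
  exact Nat.card_congr (subtypeEquivRight fun v => ⟨fun h => ⟨h, v.2.2.2.1⟩, And.left⟩)

theorem FreeVertex.card_fst_eq {j : ℤ} (h0 : 0 ≤ j) (hr : j ≤ r) :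
    Nat.card {w : FreeVertex r nn // w.1.1.1 = j} = nn j - 1 := by
  rw [show nn j - 1 = nn j + 1 - 2 by omega, ← Vertex.card_fst_eq_and_le_snd h0 hr 2 one_le_two]
  exact Nat.card_congr ((subtypeSubtypeEquivSubtypeInter (fun v : Vertex r nn => 2 ≤ v.1.2)
    (fun v => v.1.1 = j)).trans (subtypeEquivRight fun _ => and_comm))

def FreeVertex.toPunctured (w : FreeVertex r nn) : PuncturedVertex r nn :=
  ⟨w.1.1, w.1.2, fun h => by simpa [h] using w.2⟩

theorem FreeVertex.toPunctured_injective :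
    Function.Injective (FreeVertex.toPunctured (r := r) (nn := nn)) :=
  fun _ _ h => Subtype.ext (Subtype.ext (Subtype.mk.inj h))

def PuncturedVertex.toFree (v : PuncturedVertex r nn) (h : v.1.2 ≠ 1) : FreeVertex r nn :=
  ⟨⟨v.1, v.2.1⟩, by have := v.2.1.2.2.1; dsimp only; omega⟩

theorem PuncturedVertex.one_le_fst (v : PuncturedVertex r nn) (h : v.1.2 = 1) : 1 ≤ v.1.1 := by
  by_contra hi
  exact v.2.2 (Prod.ext (by have := v.2.1.1; omega) h)

end Vertices

section Spine

variable {r : ℤ} {nn : ℤ → ℕ}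

abbrev FollowsSpine (f : PuncturedVertex r nn → Vertex r nn) : Prop :=
  ∀ v, 1 ≤ v.1.1 → v.1.2 = 1 → (f v : ℤ × ℕ) = (v.1.1 - 1, 1)

abbrev sFunctions (S : Finset ℤ) (r : ℤ) (nn : ℤ → ℕ) (n : ℤ → ℤ → ℕ) :
    Set (PuncturedVertex r nn → Vertex r nn) :=
  {f | (∀ v, v.1.1 - (f v).1.1 ∈ S) ∧ FollowsSpine f ∧
    ∀ i ∈ Finset.Icc 0 r, ∀ s ∈ S, {v | v.1.1 = i ∧ (f v).1.1 = i - s}.ncard = n i s}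

abbrev freeSFunctions (S : Finset ℤ) (r : ℤ) (nn : ℤ → ℕ) (m : ℤ → ℤ → ℕ) : Type :=
  {g : FreeVertex r nn → Vertex r nn // (∀ w, w.1.1.1 - (g w).1.1 ∈ S) ∧
    ∀ i ∈ Finset.Icc 0 r, ∀ s ∈ S, Nat.card {w // w.1.1.1 = i ∧ (g w).1.1 = i - s} = m i s}

/-- The number of spine vertices `i^1 ↦ (i-1)^1` of level `i` and out-type `s`. -/
def spineCount (i s : ℤ) : ℕ := if s = 1 ∧ 1 ≤ i then 1 else 0

theorem spineCount_le {n : ℤ → ℤ → ℕ} (hspine : ∀ i ∈ Finset.Icc 1 r, 1 ≤ n i 1) {i : ℤ}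
    (hi : i ∈ Finset.Icc 0 r) (s : ℤ) : spineCount i s ≤ n i s := by
  unfold spineCount
  split_ifs with h
  · obtain ⟨rfl, h⟩ := h
    exact hspine i (Finset.mem_Icc.mpr ⟨h, (Finset.mem_Icc.mp hi).2⟩)
  · exact Nat.zero_le _

theorem ncard_inter_two_le_snd (P : PuncturedVertex r nn → Prop) :
    ({v | P v} ∩ {v | 2 ≤ v.1.2}).ncard = Nat.card {w : FreeVertex r nn // P w.toPunctured} := by
  refine Eq.trans ?_ ((Set.ncard_image_of_injective _ FreeVertex.toPunctured_injective).trans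
    (Nat.card_coe_set_eq _).symm)
  congr 1
  ext v
  refine ⟨fun ⟨hv, h2⟩ => ⟨⟨⟨v.1, v.2.1⟩, h2⟩, hv, rfl⟩, ?_⟩
  rintro ⟨w, hw, rfl⟩
  exact ⟨hw, w.2⟩

variable (hpos : ∀ i ∈ Finset.Icc 0 r, 0 < nn i)
include hpos

theorem ncard_diff_two_le_snd {f : PuncturedVertex r nn → Vertex r nn} (hf : FollowsSpine f)
    {i : ℤ} (hi : i ∈ Finset.Icc 0 r) (s : ℤ) :
    ({v | v.1.1 = i ∧ (f v).1.1 = i - s} \ {v | 2 ≤ v.1.2}).ncard = spineCount i s := by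
  rw [Finset.mem_Icc] at hi
  have hsnd (v : PuncturedVertex r nn) (h : ¬ 2 ≤ v.1.2) : v.1.2 = 1 := by
    have := v.2.1.2.2.1
    omega
  unfold spineCount
  split_ifs with hc
  · obtain ⟨rfl, h1i⟩ := hc
    let v₀ : PuncturedVertex r nn :=
      ⟨(i, 1), ⟨hi.1, hi.2, le_rfl, hpos i (Finset.mem_Icc.mpr hi)⟩, fun h => by
        simp only [Prod.mk.injEq] at h; omega⟩
    refine Set.ncard_eq_one.mpr ⟨v₀, Set.ext fun v => ⟨fun ⟨⟨h1, _⟩, h2⟩ => ?_, ?_⟩⟩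
    · exact Subtype.ext (Prod.ext h1 (hsnd v h2))
    · rintro rfl
      exact ⟨⟨rfl, congrArg Prod.fst (hf v₀ h1i rfl)⟩, by simp [v₀]⟩
  · rw [Set.ncard_eq_zero]
    refine Set.eq_empty_iff_forall_notMem.mpr fun v ⟨⟨h1, h2⟩, h3⟩ => hc ?_
    have h1v := hsnd v h3
    have := congrArg Prod.fst (hf v (v.one_le_fst h1v) h1v)
    have := v.one_le_fst h1v
    simp only at *
    omega

theorem ncard_level_eq_card_free_add_spineCount {f : PuncturedVertex r nn → Vertex r nn}
    (hf : FollowsSpine f) {i : ℤ} (hi : i ∈ Finset.Icc 0 r) (s : ℤ) :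
    {v : PuncturedVertex r nn | v.1.1 = i ∧ (f v).1.1 = i - s}.ncard =
      Nat.card {w : FreeVertex r nn // w.1.1.1 = i ∧ (f w.toPunctured).1.1 = i - s} +
        spineCount i s := by
  rw [← Set.ncard_inter_add_ncard_sdiff_eq_ncard _ {v : PuncturedVertex r nn | 2 ≤ v.1.2},
    ncard_inter_two_le_snd, ncard_diff_two_le_snd hpos hf hi]
  rfl

def extendSpine (g : FreeVertex r nn → Vertex r nn) (v : PuncturedVertex r nn) : Vertex r nn :=
  if h : v.1.2 = 1 then
    ⟨(v.1.1 - 1, 1), by have := v.one_le_fst h; have := v.2.1.2.1; omega, by omega, le_rfl,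
      hpos _ (Finset.mem_Icc.mpr ⟨by have := v.one_le_fst h; omega, by have := v.2.1.2.1; omega⟩)⟩
  else g (v.toFree h)

theorem extendSpine_toPunctured (g : FreeVertex r nn → Vertex r nn) (w : FreeVertex r nn) :
    extendSpine hpos g w.toPunctured = g w := by
  have h : w.toPunctured.1.2 ≠ 1 := by have := w.2; simp only [FreeVertex.toPunctured]; omega
  rw [extendSpine, dif_neg h]
  rfl

theorem followsSpine_extendSpine (g : FreeVertex r nn → Vertex r nn) :
    FollowsSpine (extendSpine hpos g) := fun v _ h => by simp [extendSpine, h]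

theorem extendSpine_eq {f : PuncturedVertex r nn → Vertex r nn} (hf : FollowsSpine f) :
    extendSpine hpos (fun w => f w.toPunctured) = f := by
  funext v
  by_cases h : v.1.2 = 1
  · simp only [extendSpine, h, dif_pos]
    exact Subtype.ext (hf v (v.one_le_fst h) h).symm
  · simp only [extendSpine, h, dif_neg, not_false_eq_true]
    rfl

theorem sub_fst_extendSpine_mem {S : Finset ℤ} (h1S : 1 ∈ S) {g : FreeVertex r nn → Vertex r nn}
    (hg : ∀ w, w.1.1.1 - (g w).1.1 ∈ S) (v : PuncturedVertex r nn) :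
    v.1.1 - (extendSpine hpos g v).1.1 ∈ S := by
  by_cases h : v.1.2 = 1
  · have := congrArg Prod.fst (followsSpine_extendSpine hpos g v (v.one_le_fst h) h)
    simp only at this
    rwa [this, sub_sub_cancel]
  · rw [extendSpine, dif_neg h]
    exact hg (v.toFree h)

theorem ncard_sFunctions_eq_card_free {S : Finset ℤ} (h1S : 1 ∈ S) {n : ℤ → ℤ → ℕ}
    (hspine : ∀ i ∈ Finset.Icc 1 r, 1 ≤ n i 1) :
    (sFunctions S r nn n).ncard =
      Nat.card (freeSFunctions S r nn fun i s => n i s - spineCount i s) := by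
  rw [← Nat.card_coe_set_eq]
  exact Nat.card_congr
    { toFun f := ⟨fun w => f.1 w.toPunctured, fun w => f.2.1 w.toPunctured, fun i hi s hs => by
        have := ncard_level_eq_card_free_add_spineCount hpos f.2.2.1 hi s
        rw [f.2.2.2 i hi s hs] at this
        dsimp only
        omega⟩
      invFun g := ⟨extendSpine hpos g.1, sub_fst_extendSpine_mem hpos h1S g.2.1,
        followsSpine_extendSpine hpos g.1, fun i hi s hs => by
          rw [ncard_level_eq_card_free_add_spineCount hpos (followsSpine_extendSpine hpos g.1) hi s]
          simp only [extendSpine_toPunctured]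
          have := spineCount_le hspine hi s
          rw [g.2.2 i hi s hs]
          dsimp only
          omega⟩
      left_inv f := Subtype.ext (extendSpine_eq hpos f.2.2.1)
      right_inv g := Subtype.ext (funext (extendSpine_toPunctured hpos g.1)) }

theorem ncard_sFunctions_eq_zero {S : Finset ℤ} (h1S : 1 ∈ S) {n : ℤ → ℤ → ℕ} {i : ℤ}
    (hi : i ∈ Finset.Icc 1 r) (hni : n i 1 = 0) : (sFunctions S r nn n).ncard = 0 := by
  rw [Finset.mem_Icc] at hi
  have hi' : i ∈ Finset.Icc 0 r := Finset.mem_Icc.mpr ⟨by omega, hi.2⟩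
  refine (Set.ncard_eq_zero).2 (Set.eq_empty_of_forall_notMem fun f ⟨_, hf, hcount⟩ => ?_)
  have := ncard_level_eq_card_free_add_spineCount hpos hf hi' 1
  rw [hcount i hi' 1 h1S, hni, spineCount, if_pos ⟨rfl, hi.1⟩] at this
  omega

end Spine

section Arithmetic

open Finset

variable {S : Finset ℤ} {r : ℤ}

theorem prod_prod_ite_spine {M : Type*} [CommMonoid M] (h1S : 1 ∈ S) (x : ℤ → M) :
    ∏ i ∈ Icc 0 r, ∏ s ∈ S, (if s = 1 ∧ 1 ≤ i then x i else 1) = ∏ i ∈ Icc 1 r, x i := by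
  have : Icc 1 r = {i ∈ Icc 0 r | 1 ≤ i} := by ext; simp only [mem_Icc, mem_filter]; omega
  simp [ite_and, prod_ite_eq', h1S, this, prod_filter]

theorem sum_spineCount (h1S : 1 ∈ S) (i : ℤ) :
    ∑ s ∈ S, spineCount i s = if 1 ≤ i then 1 else 0 := by
  simp [spineCount, ite_and, sum_ite_eq', h1S]

theorem prod_prod_eq_mul_prod_spine {M : Type*} [CommMonoid M] (h1S : 1 ∈ S) {n m : ℤ → ℤ → ℕ}
    (hnm : ∀ i ∈ Icc 0 r, ∀ s ∈ S, n i s = m i s + spineCount i s)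
    (F : ℤ → ℤ → ℕ → M) (y : ℤ → M)
    (hF : ∀ i ∈ Icc 1 r, F i 1 (m i 1 + 1) = F i 1 (m i 1) * y i) :
    ∏ i ∈ Icc 0 r, ∏ s ∈ S, F i s (n i s) =
      (∏ i ∈ Icc 0 r, ∏ s ∈ S, F i s (m i s)) * ∏ i ∈ Icc 1 r, y i := by
  rw [← prod_prod_ite_spine h1S y, ← prod_mul_distrib]
  refine prod_congr rfl fun i hi => ?_
  rw [← prod_mul_distrib]
  refine prod_congr rfl fun s hs => ?_
  by_cases h : s = 1 ∧ 1 ≤ i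
  · obtain ⟨rfl, h1⟩ := h
    rw [if_pos ⟨rfl, h1⟩, hnm i hi 1 hs, spineCount, if_pos ⟨rfl, h1⟩]
    exact hF i (mem_Icc.mpr ⟨h1, (mem_Icc.mp hi).2⟩)
  · rw [if_neg h, mul_one, hnm i hi s hs, spineCount, if_neg h, add_zero]

theorem prod_prod_pow_sub_eq_prod_pow_sum {M : Type*} [CommMonoid M] {n : ℤ → ℤ → ℕ}
    (hz : ∀ i s : ℤ, (s ∉ S ∨ i < 0 ∨ r < i ∨ i - s < 0 ∨ r < i - s) → n i s = 0)
    (x : ℤ → M) :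
    ∏ i ∈ Icc 0 r, ∏ s ∈ S, x (i - s) ^ n i s = ∏ i ∈ Icc 0 r, x i ^ ∑ s ∈ S, n (i + s) s := by
  have hrange {i s : ℤ} (h : n i s ≠ 0) : 0 ≤ i ∧ i ≤ r ∧ 0 ≤ i - s ∧ i - s ≤ r := by
    by_contra hc
    exact h (hz i s (by omega))
  simp only [← prod_pow_eq_pow_sum]
  rw [prod_comm, prod_comm (s := Icc 0 r)]
  refine prod_congr rfl fun s _ => prod_bij_ne_one (fun i _ _ => i - s) ?_ ?_ ?_ ?_
  · intro i _ h
    have := hrange fun h' => h (by rw [h', pow_zero])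
    simp only [mem_Icc]
    omega
  · intro _ _ _ _ _ _ h
    omega
  · intro j _ h
    have := hrange fun h' => h (by rw [h', pow_zero])
    exact ⟨j + s, by simp only [mem_Icc]; omega, by simpa using h, by simp⟩
  · intro i _ _
    simp

theorem prod_Icc_eq_mul_prod_pred {M : Type*} [CommMonoid M] (hr : 0 ≤ r) (x : ℤ → M) :
    ∏ i ∈ Icc 0 r, x i = x r * ∏ i ∈ Icc 1 r, x (i - 1) := by
  rw [← Ico_insert_right hr, prod_insert (by simp)]
  congr 1
  refine prod_nbij' (· + 1) (· - 1) ?_ ?_ ?_ ?_ ?_ <;> intro i hi <;> simp_all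

end Arithmetic

theorem card_freeSFunctions_mul_prod_factorial {S : Finset ℤ} (h1S : 1 ∈ S) {r : ℤ}
    {n : ℤ → ℤ → ℕ}
    (hz : ∀ i s : ℤ, (s ∉ S ∨ i < 0 ∨ r < i ∨ i - s < 0 ∨ r < i - s) → n i s = 0)
    {nn : ℤ → ℕ} (hnn : ∀ i, nn i = (if i = 0 then 1 else 0) + ∑ s ∈ S, n i s)
    (hspine : ∀ i ∈ Finset.Icc 1 r, 1 ≤ n i 1) :
    Nat.card (freeSFunctions S r nn fun i s => n i s - spineCount i s) *
        ∏ i ∈ Finset.Icc 0 r, ∏ s ∈ S, (n i s - spineCount i s)! =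
      (∏ i ∈ Finset.Icc 0 r, (nn i - 1)!) *
        ∏ i ∈ Finset.Icc 0 r, ∏ s ∈ S, nn (i - s) ^ (n i s - spineCount i s) := by
  have hlevel (i : ℤ) (hi : i ∈ Finset.Icc 0 r) :
      ∑ s ∈ S, (n i s - spineCount i s) = Nat.card {w : FreeVertex r nn // w.1.1.1 = i} := by
    have hsub := Finset.sum_tsub_distrib S fun s _ => spineCount_le hspine hi s
    rw [Finset.mem_Icc] at hi
    rw [hsub, sum_spineCount h1S, FreeVertex.card_fst_eq hi.1 hi.2, hnn i]
    split_ifs <;> omega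
  have hpow (i : ℤ) (s : ℤ) :
      Nat.card {v : Vertex r nn // v.1.1 = i - s} ^ (n i s - spineCount i s) =
        nn (i - s) ^ (n i s - spineCount i s) := by
    by_cases h : 0 ≤ i - s ∧ i - s ≤ r
    · rw [Vertex.card_fst_eq h.1 h.2]
    · rw [hz i s (by omega), Nat.zero_sub, pow_zero, pow_zero]
  rw [card_levelled_fun_mul_prod_factorial (fun w : FreeVertex r nn => w.1.1.1)
      (fun v : Vertex r nn => v.1.1) (Finset.Icc 0 r) S _
      (fun w => Finset.mem_Icc.mpr ⟨w.1.2.1, w.1.2.2.1⟩) hlevel, ← Finset.prod_mul_distrib]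
  refine Finset.prod_congr rfl fun i hi => ?_
  simp only [hpow, FreeVertex.card_fst_eq (Finset.mem_Icc.mp hi).1 (Finset.mem_Icc.mp hi).2]

theorem S_functions_out_type_count_general
    (S : Finset ℤ) (h1S : 1 ∈ S)
    (r : ℤ) (hr : 0 ≤ r) (n : ℤ → ℤ → ℕ)
    (hz : ∀ i s : ℤ, (s ∉ S ∨ i < 0 ∨ r < i ∨ i - s < 0 ∨ r < i - s) → n i s = 0)
    (nn : ℤ → ℕ) (hnn : ∀ i, nn i = (if i = 0 then 1 else 0) + ∑ s ∈ S, n i s)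
    (hpos : ∀ i ∈ Finset.Icc 0 r, 0 < nn i) :
    {f : {v : ℤ × ℕ // (0 ≤ v.1 ∧ v.1 ≤ r ∧ 1 ≤ v.2 ∧ v.2 ≤ nn v.1) ∧
            v ≠ ((0 : ℤ), (1 : ℕ))} →
         {v : ℤ × ℕ // 0 ≤ v.1 ∧ v.1 ≤ r ∧ 1 ≤ v.2 ∧ v.2 ≤ nn v.1} |
        (∀ v, v.1.1 - (f v).1.1 ∈ S) ∧
        (∀ v, 1 ≤ v.1.1 → v.1.2 = 1 → ((f v) : ℤ × ℕ) = (v.1.1 - 1, 1)) ∧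
        (∀ i ∈ Finset.Icc (0 : ℤ) r, ∀ s ∈ S,
          {v | v.1.1 = i ∧ (f v).1.1 = i - s}.ncard = n i s)}.ncard
      * (∏ i ∈ Finset.Icc (0 : ℤ) r, ∏ s ∈ S, (n i s).factorial)
      * (∏ i ∈ Finset.Icc (0 : ℤ) r, nn i) =
    nn r * (∏ i ∈ Finset.Icc (0 : ℤ) r, (nn i - 1).factorial)
      * (∏ i ∈ Finset.Icc (0 : ℤ) r, nn i ^ (∑ s ∈ S, n (i + s) s))
      * ∏ i ∈ Finset.Icc (1 : ℤ) r, n i 1 := by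
  by_cases hspine : ∀ i ∈ Finset.Icc 1 r, 1 ≤ n i 1
  · have hnm (i) (hi : i ∈ Finset.Icc 0 r) (s) (_ : s ∈ S) :
        n i s = (n i s - spineCount i s) + spineCount i s :=
      (Nat.sub_add_cancel (spineCount_le hspine hi s)).symm
    have hsucc (i) (hi : i ∈ Finset.Icc 1 r) : n i 1 = (n i 1 - spineCount i 1) + 1 := by
      have := hspine i hi
      rw [Finset.mem_Icc] at hi
      rw [spineCount, if_pos ⟨rfl, hi.1⟩]
      omega
    rw [ncard_sFunctions_eq_card_free hpos h1S hspine,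
      prod_prod_eq_mul_prod_spine h1S hnm (fun _ _ k => k !) (fun i => n i 1)
        fun i hi => by rw [Nat.factorial_succ, mul_comm, ← hsucc i hi],
      prod_Icc_eq_mul_prod_pred hr nn, ← prod_prod_pow_sub_eq_prod_pow_sum hz nn,
      prod_prod_eq_mul_prod_spine h1S hnm (fun i s k => nn (i - s) ^ k) (fun i => nn (i - 1))
        fun _ _ => pow_succ _ _]
    linear_combination (nn r * (∏ i ∈ Finset.Icc 1 r, n i 1) * ∏ i ∈ Finset.Icc 1 r, nn (i - 1)) *
      card_freeSFunctions_mul_prod_factorial h1S hz hnn hspine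
  · push Not at hspine
    obtain ⟨i, hi, hni⟩ := hspine
    rw [ncard_sFunctions_eq_zero hpos h1S hi (by omega), Finset.prod_eq_zero hi (by omega)]
    simp

/-- Let `V = ⋃_{i=0}^r V i` with `|V i| = nn i` where
`nn i = [i=0] + ∑_{s∈S} n i s`, all positive.  The number of `S`-functions
`f : V \ {0^1} → V` satisfying `f (i^1) = (i-1)^1` for `1 ≤ i ≤ r` in which, for each
`i` and `s ∈ S`, exactly `n i s` vertices of `V i` are mapped into `V (i-s)` equals
`(nn r * ∏ (nn i - 1)! * ∏ nn i ^ (c i - 1) * ∏_{i=1}^r n i 1) / ∏_{i,s} (n i s)!`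
with `c i = ∑_{s∈S} n (i+s) s`; the identity is stated here with denominators
cleared (both sides are additionally multiplied by `∏ nn i` to interpret
`nn i ^ (c i - 1)`, whose exponent may be `-1`). -/
theorem S_functions_out_type_count
    (S : Finset ℤ) (h1S : 1 ∈ S) (hSle : ∀ s ∈ S, s ≤ 1)
    (r : ℤ) (hr : 0 ≤ r) (n : ℤ → ℤ → ℕ)
    (hz : ∀ i s : ℤ, (s ∉ S ∨ i < 0 ∨ r < i ∨ i - s < 0 ∨ r < i - s) → n i s = 0)
    (nn : ℤ → ℕ) (hnn : ∀ i, nn i = (if i = 0 then 1 else 0) + ∑ s ∈ S, n i s)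
    (hpos : ∀ i ∈ Finset.Icc 0 r, 0 < nn i) :
    {f : {v : ℤ × ℕ // (0 ≤ v.1 ∧ v.1 ≤ r ∧ 1 ≤ v.2 ∧ v.2 ≤ nn v.1) ∧
            v ≠ ((0 : ℤ), (1 : ℕ))} →
         {v : ℤ × ℕ // 0 ≤ v.1 ∧ v.1 ≤ r ∧ 1 ≤ v.2 ∧ v.2 ≤ nn v.1} |
        (∀ v, v.1.1 - (f v).1.1 ∈ S) ∧
        (∀ v, 1 ≤ v.1.1 → v.1.2 = 1 → ((f v) : ℤ × ℕ) = (v.1.1 - 1, 1)) ∧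
        (∀ i ∈ Finset.Icc (0 : ℤ) r, ∀ s ∈ S,
          {v | v.1.1 = i ∧ (f v).1.1 = i - s}.ncard = n i s)}.ncard
      * (∏ i ∈ Finset.Icc (0 : ℤ) r, ∏ s ∈ S, (n i s).factorial)
      * (∏ i ∈ Finset.Icc (0 : ℤ) r, nn i) =
    nn r * (∏ i ∈ Finset.Icc (0 : ℤ) r, (nn i - 1).factorial)
      * (∏ i ∈ Finset.Icc (0 : ℤ) r, nn i ^ (∑ s ∈ S, n (i + s) s))
      * ∏ i ∈ Finset.Icc (1 : ℤ) r, n i 1 :=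
  S_functions_out_type_count_general S h1S r hr n hz nn hnn hpos
end

section
/- Let m_0, m_1 ≥ 1 and prescribe degrees d(u_p) for white vertices u_1,...,u_{m_0} and d(v_q) for black vertices v_1,...,v_{m_1} with Σ_p d(u_p) = Σ_q d(v_q) = m_0 + m_1 - 1. Then the number of spanning trees of K_{m_0,m_1} in which each vertex has its prescribed degree equals (m_0 - 1)!(m_1 - 1)! / (∏_c (c!)^{k(0,c)+k(1,c)}), where k(0,c) (resp. k(1,c)) is the number of white (resp. black) vertices of degree c + 1. -/
/-!
Deleting a leaf is a bijection between the spanning trees of `K_{A,B}` in which the leaf `a₀ ∈ A`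
hangs on `b ∈ B` and the spanning trees of `K_{A - a₀, B}` in which `b` has one neighbour fewer.
Every vertex of `A` has degree `≥ 1` and the degrees on `A` sum to `|A| + |B| - 1 < 2|A|` once
`|B| ≤ |A|`, so (after swapping the sides if necessary) such a leaf exists. Summing the induction
hypothesis over `b` gives `∑_b (d_b - 1) · (|A| - 2)! (|B| - 1)! = (|A| - 1)! (|B| - 1)!`, because
the degrees `d_b - 1` add up to `|A| - 1`.
-/

open Finset Function
open scoped Nat

universe u

theorem Fintype.exists_eq_one_of_sum_lt_two_mul {α : Type*} [Fintype α] {g : α → ℕ}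
    (hg : ∀ a, 1 ≤ g a) (hsum : ∑ a, g a < 2 * Fintype.card α) : ∃ a, g a = 1 := by
  by_contra! h
  have := card_nsmul_le_sum univ (fun a => g a) 2 fun a _ => by have := hg a; have := h a; omega
  rw [card_univ, smul_eq_mul] at this
  omega

theorem Fintype.sum_update_sub_one_add_one {ι : Type*} [Fintype ι] [DecidableEq ι] (g : ι → ℕ)
    {i : ι} (hi : 1 ≤ g i) : ∑ x, update g i (g i - 1) x + 1 = ∑ x, g x := by
  rw [sum_update_of_mem (mem_univ i), sum_eq_add_sum_sdiff_singleton_of_mem (mem_univ i)]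
  omega

theorem Fintype.prod_factorial_sub_one_eq_mul_prod_update {ι : Type*} [Fintype ι]
    [DecidableEq ι] (g : ι → ℕ) {i : ι} (hi : 2 ≤ g i) :
    ∏ x, (g x - 1)! = (g i - 1) * ∏ x, (update g i (g i - 1) x - 1)! := by
  rw [prod_eq_mul_prod_sdiff_singleton_of_mem (mem_univ i),
    prod_eq_mul_prod_sdiff_singleton_of_mem (mem_univ i) (fun x => (update g i (g i - 1) x - 1)!),
    update_self, ← mul_assoc, Nat.mul_factorial_pred (by omega)]
  congr 1
  exact Finset.prod_congr rfl fun x hx => by rw [update_of_ne (by simpa using hx)]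

theorem Finset.prod_range_pow_card_filter_eq_prod {α M : Type*} [Fintype α] [CommMonoid M]
    (f : ℕ → M) {g : α → ℕ} {N : ℕ} (hg : ∀ a, 1 ≤ g a) (hN : ∀ a, g a ≤ N) :
    ∏ c ∈ range N, f c ^ #{a | g a = c + 1} = ∏ a, f (g a - 1) := by
  rw [← prod_fiberwise_of_maps_to (g := fun a => g a - 1) (t := range N)
    (fun a _ => mem_range.mpr (by have := hg a; have := hN a; omega))]
  refine prod_congr rfl fun c _ => ?_
  rw [prod_congr rfl fun a ha => congrArg f (mem_filter.mp ha).2, prod_const]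
  congr 2
  ext a
  have := hg a
  simp only [mem_filter, mem_univ, true_and]
  omega

namespace SimpleGraph

variable {V W : Type*}

def spanningTreesWithDegrees (G : SimpleGraph V) (d : V → ℕ) : Set (SimpleGraph V) :=
  {H | H ≤ G ∧ H.IsTree ∧ ∀ v, (H.neighborSet v).ncard = d v}

theorem comap_mem_spanningTreesWithDegrees_iff (e : W ≃ V) {G H : SimpleGraph V} {d : V → ℕ} :
    H.comap e ∈ (G.comap e).spanningTreesWithDegrees (d ∘ e) ↔
      H ∈ G.spanningTreesWithDegrees d := by
  have hle : H.comap e ≤ G.comap e ↔ H ≤ G :=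
    ⟨fun h x y hxy => by
      simpa using h (show (H.comap e).Adj (e.symm x) (e.symm y) by simpa using hxy),
      fun h _ _ hxy => h hxy⟩
  have hdeg (w : W) : ((H.comap e).neighborSet w).ncard = (H.neighborSet (e w)).ncard :=
    Set.ncard_preimage_of_injective_subset_range e.injective
      (by rw [e.surjective.range_eq]; exact Set.subset_univ _)
  simp only [spanningTreesWithDegrees, Set.mem_ofPred_eq, hle, (Iso.comap e H).isTree_iff, hdeg,
    comp_apply, e.forall_congr_left, Equiv.apply_symm_apply]

theorem ncard_spanningTreesWithDegrees_comap (e : W ≃ V) (G : SimpleGraph V) (d : V → ℕ) :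
    ((G.comap e).spanningTreesWithDegrees (d ∘ e)).ncard =
      (G.spanningTreesWithDegrees d).ncard := by
  have : G.spanningTreesWithDegrees d =
      SimpleGraph.comap e ⁻¹' (G.comap e).spanningTreesWithDegrees (d ∘ e) := by
    ext H
    exact (comap_mem_spanningTreesWithDegrees_iff e).symm
  rw [this]
  exact (Set.ncard_preimage_of_injective_subset_range (Equiv.simpleGraph e.symm).injective
    (by rw [(Equiv.simpleGraph e.symm).surjective.range_eq]; exact Set.subset_univ _)).symm

theorem sum_ncard_setOf_adj [Fintype V] (G : SimpleGraph V) (d : V → ℕ) (v : V) :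
    ∑ u, {H ∈ G.spanningTreesWithDegrees d | H.Adj v u}.ncard =
      d v * (G.spanningTreesWithDegrees d).ncard := by
  classical
  set T := (G.spanningTreesWithDegrees d).toFinset
  have hfiber (u : V) :
      {H ∈ G.spanningTreesWithDegrees d | H.Adj v u}.ncard = #{H ∈ T | H.Adj v u} := by
    rw [← Set.ncard_coe_finset]
    congr
    ext
    simp [T]
  have hdeg : ∀ H ∈ T, #{u | H.Adj v u} = d v := fun H hH => by
    rw [← (Set.mem_toFinset.mp hH).2.2 v, ← Set.ncard_coe_finset]
    congr
    ext
    simp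
  have hcount := sum_card_bipartiteAbove_eq_sum_card_bipartiteBelow (s := T) (t := univ)
    (fun H u => H.Adj v u)
  simp only [bipartiteAbove, bipartiteBelow] at hcount
  rw [sum_congr rfl fun u _ => hfiber u, ← hcount, sum_congr rfl hdeg, sum_const, smul_eq_mul,
    mul_comm, Set.ncard_eq_toFinset_card']

theorem spanningTreesWithDegrees_eq_empty_of_eq_zero [Finite V] [Nontrivial V]
    {G : SimpleGraph V} {d : V → ℕ} {u : V} (hu : d u = 0) : G.spanningTreesWithDegrees d = ∅ := by
  refine Set.eq_empty_of_forall_notMem fun H ⟨_, hH, hdeg⟩ => ?_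
  obtain ⟨x, hx⟩ := hH.connected.preconnected.exists_adj_of_nontrivial u
  have hempty := hdeg u
  rw [hu, Set.ncard_eq_zero] at hempty
  exact hempty.subset hx

theorem ncard_spanningTreesWithDegrees_zero_of_subsingleton [Subsingleton V] [Nonempty V]
    (G : SimpleGraph V) : (G.spanningTreesWithDegrees 0).ncard = 1 := by
  rw [Set.ncard_eq_one]
  refine ⟨⊥, Set.eq_singleton_iff_unique_mem.mpr ⟨⟨bot_le, ⟨?_, isAcyclic_bot⟩, fun v => ?_⟩,
    fun H _ => Subsingleton.elim _ _⟩⟩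
  · exact (connected_iff _).mpr ⟨fun x y => Subsingleton.elim x y ▸ Reachable.refl x, inferInstance⟩
  · simp

section LeafDeletion

variable {f : W ↪ V} {v : V}

theorem comap_map_sup_edge (hv : v ∉ Set.range f) (G' : SimpleGraph W) (w : W) :
    (G'.map f ⊔ edge v (f w)).comap f = G' := by
  ext a b
  simp only [comap_adj, sup_adj, map_adj, f.injective.eq_iff, exists_eq_right_right,
    exists_eq_right, edge_adj]
  have := fun a => (fun h : f a = v => hv ⟨a, h⟩)
  grind

theorem neighborSet_map_sup_edge (hv : v ∉ Set.range f) (G' : SimpleGraph W) (w : W) :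
    (G'.map f ⊔ edge v (f w)).neighborSet v = {f w} := by
  ext x
  simp only [mem_neighborSet, sup_adj, map_adj, edge_adj, Set.mem_singleton_iff]
  have := fun a => (fun h : f a = v => hv ⟨a, h⟩)
  grind

theorem eq_map_comap_sup_edge {H : SimpleGraph V} {w : W} (hf : Set.range f = {v}ᶜ)
    (hv : H.neighborSet v = {f w}) : H = (H.comap f).map f ⊔ edge v (f w) := by
  have hrange (x : V) : x ≠ v → ∃ a, f a = x := by simp [← Set.mem_range, hf]
  have hne (a : W) : f a ≠ v := by simp [← Set.mem_compl_singleton_iff, ← hf]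
  have hadj (y : V) : H.Adj v y ↔ y = f w := by rw [← mem_neighborSet, hv]; rfl
  ext x y
  simp only [sup_adj, map_adj, comap_adj, edge_adj]
  by_cases hx : x = v
  · subst hx
    grind
  by_cases hy : y = v
  · subst hy
    rw [H.adj_comm]
    grind
  obtain ⟨a, rfl⟩ := hrange x hx
  obtain ⟨b, rfl⟩ := hrange y hy
  grind

theorem ncard_neighborSet_eq_ncard_neighborSet_comap_add [Finite V] [DecidableEq W]
    {H : SimpleGraph V} {w : W} (hf : Set.range f = {v}ᶜ) (hv : H.neighborSet v = {f w}) (u : W) :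
    (H.neighborSet (f u)).ncard = ((H.comap f).neighborSet u).ncard + if u = w then 1 else 0 := by
  have himage : f '' (H.comap f).neighborSet u = H.neighborSet (f u) \ {v} := by
    ext x
    have hx : x ∈ Set.range f ↔ x ≠ v := by rw [hf]; rfl
    simp only [Set.mem_image, mem_neighborSet, comap_adj, Set.mem_sdiff, Set.mem_singleton_iff]
    grind
  have hmem : v ∈ H.neighborSet (f u) ↔ u = w := by
    rw [mem_neighborSet, adj_comm, ← mem_neighborSet, hv, Set.mem_singleton_iff,
      f.injective.eq_iff]
  rw [← Set.ncard_image_of_injective _ f.injective, himage]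
  split_ifs with h
  · exact (Set.ncard_sdiff_singleton_add_one (hmem.mpr h)).symm
  · rw [Set.sdiff_singleton_eq_self (mt hmem.mp h), add_zero]

theorem IsTree.comap_of_range_eq_compl [Nonempty W] {H : SimpleGraph V} (hH : H.IsTree)
    (hf : Set.range f = {v}ᶜ) (hv : (H.neighborSet v).Subsingleton) : (H.comap f).IsTree := by
  refine ⟨connected_iff _ |>.mpr ⟨?_, inferInstance⟩, hH.isAcyclic.of_comap f⟩
  have hpre : (H.induce (Set.range f)).Preconnected :=
    hH.connected.preconnected.induce_of_degree_eq_one fun x hx => by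
      rw [hf, Set.mem_compl_singleton_iff, not_not] at hx
      exact hx ▸ hv
  exact (Iso.comap (Equiv.ofInjective f f.injective) _).preconnected_iff.mpr hpre

/-- Acyclicity is read off the edge count, `|E| + 1 = |V|`. -/
theorem IsTree.map_sup_edge [Finite V] {G' : SimpleGraph W} (hG' : G'.IsTree)
    (hf : Set.range f = {v}ᶜ) (w : W) : (G'.map f ⊔ edge v (f w)).IsTree := by
  have hrange (x : V) : x ≠ v → ∃ a, f a = x := by simp [← Set.mem_range, hf]
  have hne (a : W) : f a ≠ v := by simp [← Set.mem_compl_singleton_iff, ← hf]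
  rw [isTree_iff_connected_and_card]
  constructor
  · have hreach (x : V) : (G'.map f ⊔ edge v (f w)).Reachable x v := by
      by_cases hx : x = v
      · exact hx ▸ Reachable.refl _
      obtain ⟨a, rfl⟩ := hrange x hx
      exact (((hG'.connected.preconnected a w).map (Embedding.map f G').toHom).mono
        le_sup_left).trans (Adj.reachable (by simp [edge_adj, hne]))
    exact connected_iff_exists_forall_reachable _ |>.mpr ⟨v, fun x => (hreach x).symm⟩
  · have hnew : s(v, f w) ∉ f.sym2Map '' G'.edgeSet := by
      rintro ⟨e, -, he⟩
      induction e using Sym2.ind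
      simp only [Function.Embedding.sym2Map_apply, Sym2.map_mk, Sym2.eq_iff] at he
      grind
    have hedges :
        (G'.map f ⊔ edge v (f w)).edgeSet = insert s(v, f w) (f.sym2Map '' G'.edgeSet) := by
      rw [edgeSet_sup, edgeSet_map, edgeSet_edge_of_ne (hne w).symm, Set.union_singleton]
    have hcard : Nat.card W + 1 = Nat.card V := by
      rw [← Nat.card_range_of_injective f.injective, hf, Nat.card_coe_set_eq, Set.ncard_compl,
        Set.ncard_singleton]
      have : 0 < Nat.card V := Nat.card_pos_iff.mpr ⟨⟨f w⟩, inferInstance⟩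
      omega
    have : Finite W := Finite.of_injective f f.injective
    rw [Nat.card_coe_set_eq, hedges, Set.ncard_insert_of_notMem hnew,
      Set.ncard_image_of_injective _ f.sym2Map.injective, ← Nat.card_coe_set_eq,
      (isTree_iff_connected_and_card.mp hG').2, hcard]

theorem ncard_neighborSet_comap_eq_update_iff [Finite V] [DecidableEq W] {H : SimpleGraph V}
    {d : V → ℕ} {w : W} (hf : Set.range f = {v}ᶜ) (hv : H.neighborSet v = {f w})
    (hw : d (f w) ≠ 0) (u : W) :
    ((H.comap f).neighborSet u).ncard = update (d ∘ f) w (d (f w) - 1) u ↔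
      (H.neighborSet (f u)).ncard = d (f u) := by
  rw [ncard_neighborSet_eq_ncard_neighborSet_comap_add hf hv]
  rcases eq_or_ne u w with rfl | hu <;> simp [*]
  omega

theorem comap_mem_spanningTreesWithDegrees_update [Finite V] [DecidableEq W]
    {G H : SimpleGraph V} {d : V → ℕ} {w : W} (hf : Set.range f = {v}ᶜ) (hw : d (f w) ≠ 0)
    (hH : H ∈ G.spanningTreesWithDegrees d) (hv : H.neighborSet v = {f w}) :
    H.comap f ∈ (G.comap f).spanningTreesWithDegrees (update (d ∘ f) w (d (f w) - 1)) := by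
  have : Nonempty W := ⟨w⟩
  exact ⟨fun _ _ h => hH.1 h, hH.2.1.comap_of_range_eq_compl hf (hv ▸ Set.subsingleton_singleton),
    fun u => (ncard_neighborSet_comap_eq_update_iff hf hv hw u).mpr (hH.2.2 _)⟩

theorem map_sup_edge_mem_spanningTreesWithDegrees [Finite V] [DecidableEq W] {G : SimpleGraph V}
    {G' : SimpleGraph W} {d : V → ℕ} {w : W} (hf : Set.range f = {v}ᶜ) (hv : d v = 1)
    (hw : d (f w) ≠ 0) (hvw : G.Adj v (f w))
    (hG' : G' ∈ (G.comap f).spanningTreesWithDegrees (update (d ∘ f) w (d (f w) - 1))) :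
    G'.map f ⊔ edge v (f w) ∈ G.spanningTreesWithDegrees d := by
  have hv' : v ∉ Set.range f := by simp [hf]
  have hleaf := neighborSet_map_sup_edge hv' G' w
  refine ⟨sup_le ((map_le_iff_le_comap f G' G).mpr hG'.1) ((edge_le_iff G).mpr (Or.inr hvw)),
    hG'.2.1.map_sup_edge hf w, fun x => ?_⟩
  by_cases hx : x = v
  · rw [hx, hleaf, Set.ncard_singleton, hv]
  obtain ⟨u, rfl⟩ : x ∈ Set.range f := by simpa [hf] using hx
  rw [← ncard_neighborSet_comap_eq_update_iff hf hleaf hw, comap_map_sup_edge hv']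
  exact hG'.2.2 u

/-- `H ↦ H.comap f` deletes the leaf `v`; its inverse `G' ↦ G'.map f ⊔ edge v (f w)` attaches
`v` to `f w` again. -/
theorem ncard_setOf_adj_leaf [Finite V] [DecidableEq W] {G : SimpleGraph V} {d : V → ℕ} {w : W}
    (hf : Set.range f = {v}ᶜ) (hv : d v = 1) (hw : d (f w) ≠ 0) (hvw : G.Adj v (f w)) :
    {H ∈ G.spanningTreesWithDegrees d | H.Adj v (f w)}.ncard =
      ((G.comap f).spanningTreesWithDegrees (update (d ∘ f) w (d (f w) - 1))).ncard := by
  have hv' : v ∉ Set.range f := by simp [hf]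
  have hleaf {H : SimpleGraph V} (hH : H ∈ G.spanningTreesWithDegrees d)
      (hadj : H.Adj v (f w)) : H.neighborSet v = {f w} :=
    (Set.eq_of_subset_of_ncard_le (t := H.neighborSet v) (Set.singleton_subset_iff.mpr hadj)
      (by rw [hH.2.2 v, hv, Set.ncard_singleton])).symm
  have himage : (fun H => H.comap f) '' {H ∈ G.spanningTreesWithDegrees d | H.Adj v (f w)} =
      (G.comap f).spanningTreesWithDegrees (update (d ∘ f) w (d (f w) - 1)) := by
    refine Set.Subset.antisymm ?_ fun G' hG' => ?_
    · rintro _ ⟨H, ⟨hH, hadj⟩, rfl⟩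
      exact comap_mem_spanningTreesWithDegrees_update hf hw hH (hleaf hH hadj)
    · refine ⟨_, ⟨map_sup_edge_mem_spanningTreesWithDegrees hf hv hw hvw hG', ?_⟩,
        comap_map_sup_edge hv' G' w⟩
      rw [← mem_neighborSet, neighborSet_map_sup_edge hv']
      rfl
  rw [← himage, Set.InjOn.ncard_image]
  rintro H₁ ⟨hH₁, hadj₁⟩ H₂ ⟨hH₂, hadj₂⟩ h
  rw [eq_map_comap_sup_edge hf (hleaf hH₁ hadj₁), eq_map_comap_sup_edge hf (hleaf hH₂ hadj₂)]
  exact congrArg (·.map f ⊔ edge v (f w)) h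

end LeafDeletion

theorem completeBipartiteGraph_comap_sumComm (A B : Type*) :
    (completeBipartiteGraph A B).comap (Equiv.sumComm B A) = completeBipartiteGraph B A := by
  ext (x | x) (y | y) <;> simp

theorem completeBipartiteGraph_comap_sumMap {A B A' B' : Type*} (f : A' → A) (g : B' → B) :
    (completeBipartiteGraph A B).comap (Sum.map f g) = completeBipartiteGraph A' B' := by
  ext (x | x) (y | y) <;> simp

section CompleteBipartite

variable {A B : Type*}

theorem ncard_spanningTreesWithDegrees_completeBipartiteGraph_comm (d : A ⊕ B → ℕ) :
    ((completeBipartiteGraph B A).spanningTreesWithDegrees (d ∘ Equiv.sumComm B A)).ncard =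
      ((completeBipartiteGraph A B).spanningTreesWithDegrees d).ncard := by
  rw [← completeBipartiteGraph_comap_sumComm, ncard_spanningTreesWithDegrees_comap]

def leafDeletedDegrees [DecidableEq B] (d : A ⊕ B → ℕ) (a₀ : A) (b : B) :
    {a // a ≠ a₀} ⊕ B → ℕ :=
  Sum.elim (fun a => d (.inl a)) (update (fun b => d (.inr b)) b (d (.inr b) - 1))

variable [DecidableEq B] {d : A ⊕ B → ℕ} {a₀ : A}

theorem ncard_spanningTreesWithDegrees_completeBipartiteGraph_eq_sum [Fintype A] [DecidableEq A]
    [Fintype B] (hd : ∀ v, 1 ≤ d v) (ha₀ : d (.inl a₀) = 1) :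
    ((completeBipartiteGraph A B).spanningTreesWithDegrees d).ncard =
      ∑ b, ((completeBipartiteGraph {a // a ≠ a₀} B).spanningTreesWithDegrees
        (leafDeletedDegrees d a₀ b)).ncard := by
  let f : {a // a ≠ a₀} ⊕ B ↪ A ⊕ B :=
    (Function.Embedding.subtype _).sumMap (Function.Embedding.refl B)
  have hf : Set.range f = {.inl a₀}ᶜ := by
    ext (a | b) <;> simp [f, Function.Embedding.sumMap]
  have hinl (a : A) : {H ∈ (completeBipartiteGraph A B).spanningTreesWithDegrees d |
      H.Adj (.inl a₀) (.inl a)} = ∅ :=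
    Set.eq_empty_of_forall_notMem fun H ⟨hH, hadj⟩ => by simpa using hH.1 hadj
  have hinr (b : B) : leafDeletedDegrees d a₀ b = update (d ∘ f) (.inr b) (d (.inr b) - 1) := by
    rw [leafDeletedDegrees, Sum.elim_update_right]
    congr
    ext (a | b) <;> rfl
  have hsum := sum_ncard_setOf_adj (completeBipartiteGraph A B) d (.inl a₀)
  rw [ha₀, one_mul, Fintype.sum_sum_type] at hsum
  simp only [← hsum, hinl, Set.ncard_empty, sum_const_zero, zero_add, hinr,
    ← completeBipartiteGraph_comap_sumMap Subtype.val (id : B → B)]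
  exact sum_congr rfl fun b _ => ncard_setOf_adj_leaf (w := .inr b) hf ha₀
    (Nat.one_le_iff_ne_zero.mp (hd _)) (by simp [f])

theorem one_le_leafDeletedDegrees (hd : ∀ v, 1 ≤ d v) {b : B} (hb : 2 ≤ d (.inr b))
    (v : {a // a ≠ a₀} ⊕ B) : 1 ≤ leafDeletedDegrees d a₀ b v := by
  rcases v with a | b'
  · exact hd _
  · rcases eq_or_ne b' b with rfl | hb' <;> simp [leafDeletedDegrees, *]
    omega

theorem sum_inl_leafDeletedDegrees_add [Fintype A] [DecidableEq A] (b : B) :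
    ∑ a, leafDeletedDegrees d a₀ b (.inl a) + d (.inl a₀) = ∑ a, d (.inl a) := by
  rw [Fintype.sum_eq_add_sum_subtype_ne (fun a => d (.inl a)) a₀, add_comm]
  rfl

theorem sum_inr_leafDeletedDegrees_add_one [Fintype B] {b : B} (hb : 1 ≤ d (.inr b)) :
    ∑ b', leafDeletedDegrees d a₀ b (.inr b') + 1 = ∑ b', d (.inr b') :=
  Fintype.sum_update_sub_one_add_one (fun b => d (.inr b)) hb

theorem prod_factorial_eq_mul_prod_factorial_leafDeletedDegrees [Fintype A] [DecidableEq A]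
    [Fintype B] (ha₀ : d (.inl a₀) = 1) {b : B} (hb : 2 ≤ d (.inr b)) :
    ∏ v, (d v - 1)! = (d (.inr b) - 1) * ∏ v, (leafDeletedDegrees d a₀ b v - 1)! := by
  rw [Fintype.prod_sum_type, Fintype.prod_sum_type, Fintype.prod_eq_mul_prod_subtype_ne _ a₀, ha₀,
    Fintype.prod_factorial_sub_one_eq_mul_prod_update (fun b => d (.inr b)) hb]
  simp only [leafDeletedDegrees, Sum.elim_inl, Sum.elim_inr, Nat.sub_self, Nat.factorial_zero,
    one_mul]
  ring

theorem ncard_spanningTreesWithDegrees_completeBipartiteGraph_of_unique [Unique A] [Unique B]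
    [Fintype A] [DecidableEq A] [Fintype B] (hd : ∀ v, d v = 1) :
    ((completeBipartiteGraph A B).spanningTreesWithDegrees d).ncard = 1 := by
  have : Subsingleton ({a : A // a ≠ default} ⊕ B) :=
    Fintype.card_le_one_iff_subsingleton.mp (by simp)
  have : Nonempty ({a : A // a ≠ default} ⊕ B) := ⟨.inr default⟩
  have hzero : leafDeletedDegrees d default default = 0 := by
    ext (⟨a, ha⟩ | b)
    · exact absurd (Subsingleton.elim a default) ha
    · simp [leafDeletedDegrees, Subsingleton.elim b default, hd]
  rw [ncard_spanningTreesWithDegrees_completeBipartiteGraph_eq_sum (fun v => (hd v).ge) (hd _),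
    Fintype.sum_unique, hzero, ncard_spanningTreesWithDegrees_zero_of_subsingleton]

/-- If `d b = 1` both sides vanish: deleting `a₀` would leave `b` isolated. -/
theorem ncard_leafDeletedDegrees_mul_prod [Fintype A] [DecidableEq A] [Fintype B]
    (hA : 2 ≤ Fintype.card A) (hd : ∀ v, 1 ≤ d v) (ha₀ : d (.inl a₀) = 1) (b : B)
    (ih : 2 ≤ d (.inr b) →
      ((completeBipartiteGraph {a // a ≠ a₀} B).spanningTreesWithDegrees
          (leafDeletedDegrees d a₀ b)).ncard * ∏ v, (leafDeletedDegrees d a₀ b v - 1)! =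
        (Fintype.card A - 2)! * (Fintype.card B - 1)!) :
    ((completeBipartiteGraph {a // a ≠ a₀} B).spanningTreesWithDegrees
        (leafDeletedDegrees d a₀ b)).ncard * ∏ v, (d v - 1)! =
      (d (.inr b) - 1) * ((Fintype.card A - 2)! * (Fintype.card B - 1)!) := by
  rcases (hd (.inr b)).eq_or_lt with hb | hb
  · obtain ⟨a, ha⟩ := Fintype.exists_ne_of_one_lt_card hA a₀
    have : Nontrivial ({a // a ≠ a₀} ⊕ B) := ⟨⟨.inl ⟨a, ha⟩, .inr b, Sum.inl_ne_inr⟩⟩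
    rw [spanningTreesWithDegrees_eq_empty_of_eq_zero (u := .inr b)
      (by simp [leafDeletedDegrees, ← hb]), ← hb]
    simp
  · rw [prod_factorial_eq_mul_prod_factorial_leafDeletedDegrees ha₀ hb, mul_left_comm, ih hb]

end CompleteBipartite

theorem ncard_spanningTreesWithDegrees_completeBipartiteGraph_mul_prod {A B : Type u}
    [Fintype A] [Fintype B] [DecidableEq A] [DecidableEq B]
    (hA : 0 < Fintype.card A) (hB : 0 < Fintype.card B) {d : A ⊕ B → ℕ} (hd : ∀ v, 1 ≤ d v)
    (hsumA : ∑ a, d (.inl a) = Fintype.card A + Fintype.card B - 1)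
    (hsumB : ∑ b, d (.inr b) = Fintype.card A + Fintype.card B - 1) :
    ((completeBipartiteGraph A B).spanningTreesWithDegrees d).ncard * ∏ v, (d v - 1)! =
      (Fintype.card A - 1)! * (Fintype.card B - 1)! := by
  obtain ⟨n, hn⟩ : ∃ n, Fintype.card A + Fintype.card B = n := ⟨_, rfl⟩
  induction n using Nat.strong_induction_on generalizing A B with
  | _ n ih =>
  wlog hBA : Fintype.card B ≤ Fintype.card A generalizing A B
  · have key := this (A := B) (B := A) hB hA (d := d ∘ Equiv.sumComm B A) (fun v => hd _)
      (by simpa [add_comm] using hsumB) (by simpa [add_comm] using hsumA) (by omega) (by omega)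
    rw [ncard_spanningTreesWithDegrees_completeBipartiteGraph_comm] at key
    simp only [comp_apply, Equiv.prod_comp (Equiv.sumComm B A) (fun v => (d v - 1)!)] at key
    rw [key, mul_comm]
  rcases (by omega : Fintype.card A = 1 ∨ 2 ≤ Fintype.card A) with hA1 | hA2
  · obtain ⟨_⟩ := Fintype.card_eq_one_iff_nonempty_unique.mp hA1
    obtain ⟨_⟩ := Fintype.card_eq_one_iff_nonempty_unique.mp (by omega : Fintype.card B = 1)
    have hd1 (v : A ⊕ B) : d v = 1 := by
      rcases v with a | b <;> simp_all [Subsingleton.elim _ (default : A),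
        Subsingleton.elim _ (default : B)]
    rw [ncard_spanningTreesWithDegrees_completeBipartiteGraph_of_unique hd1,
      prod_eq_one fun v _ => by rw [hd1]; rfl]
    simp_all
  obtain ⟨a₀, ha₀⟩ := Fintype.exists_eq_one_of_sum_lt_two_mul (fun a => hd (.inl a)) (by omega)
  have hcardA' : Fintype.card {a // a ≠ a₀} = Fintype.card A - 1 := by simp
  have hterm (b : B) := ncard_leafDeletedDegrees_mul_prod hA2 hd ha₀ b fun hb => by
    have hsumA' := sum_inl_leafDeletedDegrees_add (d := d) (a₀ := a₀) b
    have hsumB' := sum_inr_leafDeletedDegrees_add_one (d := d) (a₀ := a₀) (hd (.inr b))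
    rw [ih _ (by omega) (by omega) hB (one_le_leafDeletedDegrees hd hb) (by omega) (by omega) rfl,
      hcardA']
    rfl
  rw [ncard_spanningTreesWithDegrees_completeBipartiteGraph_eq_sum hd ha₀, sum_mul,
    sum_congr rfl fun b _ => hterm b, ← sum_mul,
    Finset.sum_tsub_distrib univ (g := fun _ => 1) fun b _ => hd (.inr b), hsumB, sum_const,
    card_univ, smul_eq_mul, mul_one,
    show Fintype.card A + Fintype.card B - 1 - Fintype.card B = Fintype.card A - 1 by omega,
    show Fintype.card A - 2 = Fintype.card A - 1 - 1 by omega, ← mul_assoc,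
    Nat.mul_factorial_pred (by omega)]

end SimpleGraph

open SimpleGraph

/-- The number of spanning trees of `K_{m₀, m₁}` in which every
white vertex `u` has prescribed degree `d (inl u) ≥ 1` and every black vertex `v` has
prescribed degree `d (inr v) ≥ 1` (degrees summing to `m₀ + m₁ - 1` on each side)
equals `(m₀ - 1)! (m₁ - 1)! / ∏_c (c!)^(k₀ c + k₁ c)`, where `k₀ c` (resp. `k₁ c`) is
the number of white (resp. black) vertices of degree `c + 1`; stated here with
denominators cleared. -/
theorem spanning_trees_bipartite_prescribed_degrees
    (m₀ m₁ : ℕ) (h0 : 0 < m₀) (h1 : 0 < m₁)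
    (d : Fin m₀ ⊕ Fin m₁ → ℕ) (hd : ∀ v, 1 ≤ d v)
    (hsum₀ : ∑ p : Fin m₀, d (Sum.inl p) = m₀ + m₁ - 1)
    (hsum₁ : ∑ q : Fin m₁, d (Sum.inr q) = m₀ + m₁ - 1) :
    {H : SimpleGraph (Fin m₀ ⊕ Fin m₁) |
        H ≤ completeBipartiteGraph (Fin m₀) (Fin m₁) ∧ H.IsTree ∧
        ∀ v, (H.neighborSet v).ncard = d v}.ncard *
      ∏ c ∈ Finset.range (m₀ + m₁),
        (c.factorial) ^
          ((Finset.univ.filter fun p : Fin m₀ => d (Sum.inl p) = c + 1).card +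
           (Finset.univ.filter fun q : Fin m₁ => d (Sum.inr q) = c + 1).card) =
    (m₀ - 1).factorial * (m₁ - 1).factorial := by
  have hle₀ (p : Fin m₀) : d (.inl p) ≤ m₀ + m₁ :=
    (single_le_sum (f := fun p => d (.inl p)) (by simp) (mem_univ p)).trans (by omega)
  have hle₁ (q : Fin m₁) : d (.inr q) ≤ m₀ + m₁ :=
    (single_le_sum (f := fun q => d (.inr q)) (by simp) (mem_univ q)).trans (by omega)
  have key := ncard_spanningTreesWithDegrees_completeBipartiteGraph_mul_prod (A := Fin m₀)
    (B := Fin m₁) (by simpa) (by simpa) hd (by simpa) (by simpa)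
  rw [Fintype.card_fin, Fintype.card_fin] at key
  simp only [pow_add, prod_mul_distrib]
  rw [prod_range_pow_card_filter_eq_prod _ (fun p => hd (.inl p)) hle₀,
    prod_range_pow_card_filter_eq_prod _ (fun q => hd (.inr q)) hle₁,
    ← Fintype.prod_sum_type (fun v => (d v - 1)!)]
  exact key
end

section
/- Let S ⊆ Z with max S = 1 and min S = -1, i.e., S = {-1,1} or S = {-1,0,1}. Let ℓ < 0 ≤ r. For positive integers (n_i)_{ℓ ≤ i ≤ r}, the count T(n_ℓ,...,n_{-1}; n_0,...,n_r) of S-embedded Cayley trees with that vertical profile satisfies n_ℓ · T(n_ℓ,...,n_{-1}; n_0,...,n_r) = m_{-ℓ} · T(m_0,...,m_{r-ℓ}) where m_j = n_{j+ℓ} and T(m_0,...,m_{r-ℓ}) counts S-embedded trees with nonnegative profile (m_0,...,m_{r-ℓ}). -/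
/-!
Counting pairs (tree, marked vertex of minimal abscissa `ℓ`) gives `n ℓ * T(n)`. Moving the root to
the marked vertex and translating the abscissas by `-ℓ` turns such a pair into a tree with profile
`n (· + ℓ)` together with a marked vertex (the old root) of abscissa `-ℓ`, of which there are
`n 0`. This is a bijection as soon as the constraint on the edges does not depend on the root,
which is the case when `S = -S`: then "`a w - a v ∈ S` for every child `w` of `v`" just says
"`a w - a v ∈ S` for every edge `{v, w}`".
-/

theorem Nat.card_sigma_of_card_eq {ι : Type*} {F : ι → Type*} [∀ i, Finite (F i)] {k : ℕ}
    (h : ∀ i, Nat.card (F i) = k) : Nat.card (Σ i, F i) = Nat.card ι * k := by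
  rw [Nat.card_congr (Equiv.sigmaEquivProdOfEquiv fun i => Finite.equivFinOfCardEq (h i)),
    Nat.card_prod, Nat.card_fin]

theorem SimpleGraph.IsTree.forall_child_sub_mem_iff {V : Type*} {G : SimpleGraph V}
    (hG : G.IsTree) (root : V) (a : V → ℤ) {S : Set ℤ} (hS : ∀ x ∈ S, -x ∈ S) :
    (∀ v w, G.Adj v w → G.dist root w = G.dist root v + 1 → a w - a v ∈ S) ↔
      ∀ v w, G.Adj v w → a w - a v ∈ S := by
  refine ⟨fun h v w hvw => ?_, fun h v w hvw _ => h v w hvw⟩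
  rcases hG.dist_eq_dist_add_one_of_adj root hvw with hwv | hvw'
  · simpa using hS _ (h w v hvw.symm hwv)
  · exact h v w hvw hvw'

namespace EmbeddedTree

variable {V : Type*}

structure IsEmbedding (S : Set ℤ) (m : ℤ → ℕ) (G : SimpleGraph V) (a : V → ℤ) : Prop where
  isTree : G.IsTree
  sub_mem : ∀ v w, G.Adj v w → a w - a v ∈ S
  profile : ∀ i, {v | a v = i}.ncard = m i

theorem isEmbedding_sub_iff {S : Set ℤ} {m : ℤ → ℕ} {G : SimpleGraph V} {a : V → ℤ} (c : ℤ) :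
    IsEmbedding S (fun i => m (i + c)) G (fun u => a u - c) ↔ IsEmbedding S m G a := by
  have hprofile : (∀ i, {v | a v - c = i}.ncard = m (i + c)) ↔ ∀ i, {v | a v = i}.ncard = m i := by
    simp only [sub_eq_iff_eq_add]
    exact (Equiv.addRight c).forall_congr_right (q := fun i => {v | a v = i}.ncard = m i)
  refine ⟨fun ⟨hG, hsub, hm⟩ => ⟨hG, ?_, hprofile.1 hm⟩,
    fun ⟨hG, hsub, hm⟩ => ⟨hG, ?_, hprofile.2 hm⟩⟩ <;> simpa using hsub

def cayleyTrees (S : Set ℤ) (m : ℤ → ℕ) : Set (SimpleGraph V × V × (V → ℤ)) :=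
  {p | p.1.IsTree ∧ p.2.2 p.2.1 = 0 ∧
    (∀ v w, p.1.Adj v w → p.1.dist p.2.1 w = p.1.dist p.2.1 v + 1 → p.2.2 w - p.2.2 v ∈ S) ∧
    ∀ i, {v | p.2.2 v = i}.ncard = m i}

def rootedEmbeddings (S : Set ℤ) (m : ℤ → ℕ) : Set (SimpleGraph V × V × (V → ℤ)) :=
  {p | IsEmbedding S m p.1 p.2.2 ∧ p.2.2 p.2.1 = 0}

theorem cayleyTrees_eq_rootedEmbeddings {S : Set ℤ} (hS : ∀ x ∈ S, -x ∈ S) (m : ℤ → ℕ) :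
    cayleyTrees (V := V) S m = rootedEmbeddings S m := by
  ext ⟨G, root, a⟩
  simp only [cayleyTrees, rootedEmbeddings, Set.mem_ofPred_eq]
  constructor
  · rintro ⟨hG, hroot, hchild, hprofile⟩
    exact ⟨⟨hG, (hG.forall_child_sub_mem_iff root a hS).1 hchild, hprofile⟩, hroot⟩
  · rintro ⟨⟨hG, hedge, hprofile⟩, hroot⟩
    exact ⟨hG, hroot, (hG.forall_child_sub_mem_iff root a hS).2 hedge, hprofile⟩

def rerootEquiv (S : Set ℤ) (m : ℤ → ℕ) (c : ℤ) :
    (Σ p : rootedEmbeddings (V := V) S m, {v // p.1.2.2 v = c}) ≃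
      Σ p : rootedEmbeddings (V := V) S (fun i => m (i + c)), {v // p.1.2.2 v = -c} where
  toFun := fun ⟨⟨(G, root, a), ha, hroot⟩, v, hv⟩ =>
    ⟨⟨(G, v, fun u => a u - c), (isEmbedding_sub_iff c).2 ha, sub_eq_zero.2 hv⟩,
      root, by simp only at hroot ⊢; rw [hroot, zero_sub]⟩
  invFun := fun ⟨⟨(G, root, b), hb, hroot⟩, v, hv⟩ =>
    ⟨⟨(G, v, fun u => b u + c), (isEmbedding_sub_iff c).1 (by simpa using hb),
      eq_neg_iff_add_eq_zero.1 hv⟩, root, by simp only at hroot ⊢; rw [hroot, zero_add]⟩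
  left_inv := fun ⟨⟨(G, root, a), _, _⟩, v, _⟩ =>
    Sigma.subtype_ext (Subtype.ext (Prod.ext rfl (Prod.ext rfl (funext fun u =>
      sub_add_cancel (a u) c)))) rfl
  right_inv := fun ⟨⟨(G, root, b), _, _⟩, v, _⟩ =>
    Sigma.subtype_ext (Subtype.ext (Prod.ext rfl (Prod.ext rfl (funext fun u =>
      add_sub_cancel_right (b u) c)))) rfl

theorem card_mul_ncard_rootedEmbeddings [Finite V] (S : Set ℤ) (m : ℤ → ℕ) (c : ℤ) :
    m c * (rootedEmbeddings (V := V) S m).ncard =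
      m 0 * (rootedEmbeddings (V := V) S (fun i => m (i + c))).ncard := by
  have hfiber : ∀ (m : ℤ → ℕ) (c : ℤ) (p : rootedEmbeddings (V := V) S m),
      Nat.card {v // p.1.2.2 v = c} = m c := fun m c p => p.2.1.profile c
  calc m c * (rootedEmbeddings S m).ncard
      = Nat.card (Σ p : rootedEmbeddings (V := V) S m, {v // p.1.2.2 v = c}) := by
        rw [Nat.card_sigma_of_card_eq (hfiber m c), Nat.card_coe_set_eq, mul_comm]
    _ = Nat.card (Σ p : rootedEmbeddings (V := V) S (fun i => m (i + c)), {v // p.1.2.2 v = -c}) :=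
        Nat.card_congr (rerootEquiv S m c)
    _ = m 0 * (rootedEmbeddings S (fun i => m (i + c))).ncard := by
        rw [Nat.card_sigma_of_card_eq (hfiber _ (-c)), Nat.card_coe_set_eq, mul_comm,
          neg_add_cancel]

end EmbeddedTree

theorem rerooting_identity_general
    (S : Finset ℤ) (hS : S = ({-1, 1} : Finset ℤ) ∨ S = ({-1, 0, 1} : Finset ℤ))
    (ℓ : ℤ)
    (n : ℤ → ℕ)
    (N : ℕ) :
    n ℓ *
      {p : SimpleGraph (Fin N) × Fin N × (Fin N → ℤ) |
        p.1.IsTree ∧ p.2.2 p.2.1 = 0 ∧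
        (∀ v w, p.1.Adj v w → p.1.dist p.2.1 w = p.1.dist p.2.1 v + 1 →
          p.2.2 w - p.2.2 v ∈ S) ∧
        (∀ i : ℤ, {v : Fin N | p.2.2 v = i}.ncard = n i)}.ncard =
    n 0 *
      {p : SimpleGraph (Fin N) × Fin N × (Fin N → ℤ) |
        p.1.IsTree ∧ p.2.2 p.2.1 = 0 ∧
        (∀ v w, p.1.Adj v w → p.1.dist p.2.1 w = p.1.dist p.2.1 v + 1 →
          p.2.2 w - p.2.2 v ∈ S) ∧
        (∀ i : ℤ, {v : Fin N | p.2.2 v = i}.ncard = n (i + ℓ))}.ncard := by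
  have hsymm : ∀ x ∈ (S : Set ℤ), -x ∈ (S : Set ℤ) := by
    rcases hS with rfl | rfl <;> decide
  change n ℓ * (EmbeddedTree.cayleyTrees (S : Set ℤ) n).ncard =
    n 0 * (EmbeddedTree.cayleyTrees (S : Set ℤ) (fun i => n (i + ℓ))).ncard
  rw [EmbeddedTree.cayleyTrees_eq_rootedEmbeddings hsymm,
    EmbeddedTree.cayleyTrees_eq_rootedEmbeddings hsymm]
  exact EmbeddedTree.card_mul_ncard_rootedEmbeddings _ n ℓ

/-- For `S = {-1, 1}` or `S = {-1, 0, 1}` and `ℓ < 0 ≤ r`, the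
number `T(n ℓ, …, n r)` of `S`-embedded Cayley trees with vertical profile
`(n ℓ, …, n r)` satisfies
`n ℓ * T(n ℓ, …, n r) = m (-ℓ) * T(m 0, …, m (r - ℓ))` where `m j = n (j + ℓ)`
(so `m (-ℓ) = n 0`).  An `S`-embedded Cayley tree is a triple `(G, root, a)` with `G`
a tree on `Fin N`, `a root = 0` and `a w - a v ∈ S` whenever `w` is a child of `v`. -/
theorem rerooting_identity
    (S : Finset ℤ) (hS : S = ({-1, 1} : Finset ℤ) ∨ S = ({-1, 0, 1} : Finset ℤ))
    (ℓ r : ℤ) (hl : ℓ < 0) (hr : 0 ≤ r)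
    (n : ℤ → ℕ) (hpos : ∀ i ∈ Finset.Icc ℓ r, 0 < n i)
    (hzero : ∀ i : ℤ, i < ℓ ∨ r < i → n i = 0)
    (N : ℕ) (hN : N = ∑ i ∈ Finset.Icc ℓ r, n i) :
    n ℓ *
      {p : SimpleGraph (Fin N) × Fin N × (Fin N → ℤ) |
        p.1.IsTree ∧ p.2.2 p.2.1 = 0 ∧
        (∀ v w, p.1.Adj v w → p.1.dist p.2.1 w = p.1.dist p.2.1 v + 1 →
          p.2.2 w - p.2.2 v ∈ S) ∧
        (∀ i : ℤ, {v : Fin N | p.2.2 v = i}.ncard = n i)}.ncard =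
    n 0 *
      {p : SimpleGraph (Fin N) × Fin N × (Fin N → ℤ) |
        p.1.IsTree ∧ p.2.2 p.2.1 = 0 ∧
        (∀ v w, p.1.Adj v w → p.1.dist p.2.1 w = p.1.dist p.2.1 v + 1 →
          p.2.2 w - p.2.2 v ∈ S) ∧
        (∀ i : ℤ, {v : Fin N | p.2.2 v = i}.ncard = n (i + ℓ))}.ncard :=
  rerooting_identity_general S hS ℓ n N
end
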